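/- arXiv:2206.14773 — 8 statements merged into one kernel-verified Lean document; each statement's English description precedes it below -/
import Mathlib

section
/- For all real numbers x₂, x₃, x₅, one has (1 + x₂² + x₃²)·((1 + x₂²)(1 + x₅²) + x₃²)·(1 + x₃² + x₅²) ≥ (1 + x₂²)^{7/6} (1 + x₃²)^{7/6} (1 + x₅²)^{7/6}. -/
private lemma root2 (x y : ℝ) (hx : 0 ≤ x) (hy : 0 ≤ y) (h : x ≤ y ^ 2) :
    x ^ ((1:ℝ)/2) ≤ y := by
  calc x ^ ((1:ℝ)/2) ≤ (y ^ 2) ^ ((1:ℝ)/2) := Real.rpow_le_rpow hx h (by norm_num)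
    _ = y := by
      rw [← Real.rpow_natCast y 2, ← Real.rpow_mul hy]
      norm_num

private lemma root3 (x y : ℝ) (hx : 0 ≤ x) (hy : 0 ≤ y) (h : x ≤ y ^ 3) :
    x ^ ((1:ℝ)/3) ≤ y := by
  calc x ^ ((1:ℝ)/3) ≤ (y ^ 3) ^ ((1:ℝ)/3) := Real.rpow_le_rpow hx h (by norm_num)
    _ = y := by
      rw [← Real.rpow_natCast y 3, ← Real.rpow_mul hy]
      norm_num

theorem stmt_1 (x₂ x₃ x₅ : ℝ) :
    (1 + x₂ ^ 2 + x₃ ^ 2) * ((1 + x₂ ^ 2) * (1 + x₅ ^ 2) + x₃ ^ 2) *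
        (1 + x₃ ^ 2 + x₅ ^ 2) ≥
      (1 + x₂ ^ 2) ^ ((7 : ℝ) / 6) * (1 + x₃ ^ 2) ^ ((7 : ℝ) / 6) *
        (1 + x₅ ^ 2) ^ ((7 : ℝ) / 6) := by
  set A : ℝ := 1 + x₂ ^ 2 with hA'
  set B : ℝ := 1 + x₃ ^ 2 with hB'
  set C : ℝ := 1 + x₅ ^ 2 with hC'
  have hb : (0:ℝ) ≤ x₃ ^ 2 := sq_nonneg _
  have hA : (1:ℝ) ≤ A := by nlinarith [sq_nonneg x₂]
  have hB : (1:ℝ) ≤ B := by nlinarith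
  have hC : (1:ℝ) ≤ C := by nlinarith [sq_nonneg x₅]
  have hA0 : (0:ℝ) < A := by linarith
  have hB0 : (0:ℝ) < B := by linarith
  have hC0 : (0:ℝ) < C := by linarith
  -- factor bounds
  have h1 : A ^ ((1:ℝ)/2) * B ^ ((1:ℝ)/2) ≤ A + x₃ ^ 2 := by
    rw [← Real.mul_rpow hA0.le hB0.le]
    exact root2 _ _ (by positivity) (by linarith) (by rw [hB']; nlinarith)
  have h3 : B ^ ((1:ℝ)/2) * C ^ ((1:ℝ)/2) ≤ C + x₃ ^ 2 := by
    rw [← Real.mul_rpow hB0.le hC0.le]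
    exact root2 _ _ (by positivity) (by linarith) (by rw [hB']; nlinarith)
  have h2 : A ^ ((2:ℝ)/3) * C ^ ((2:ℝ)/3) * B ^ ((1:ℝ)/3) ≤ A * C + x₃ ^ 2 := by
    have e : A ^ ((2:ℝ)/3) * C ^ ((2:ℝ)/3) * B ^ ((1:ℝ)/3)
        = (A ^ 2 * C ^ 2 * B) ^ ((1:ℝ)/3) := by
      rw [Real.mul_rpow (by positivity) hB0.le, Real.mul_rpow (by positivity) (by positivity),
        ← Real.rpow_natCast A 2, ← Real.rpow_natCast C 2,
        ← Real.rpow_mul hA0.le, ← Real.rpow_mul hC0.le]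
      norm_num
    rw [e]
    refine root3 _ _ (by positivity) (by nlinarith) ?_
    have hAC : (1:ℝ) ≤ A * C := by nlinarith
    rw [hB']
    nlinarith [mul_nonneg (mul_nonneg hb hb) hb, mul_nonneg (mul_nonneg hb hb) (by linarith : (0:ℝ) ≤ A*C),
      mul_nonneg hb (sq_nonneg (A*C)), sq_nonneg (A*C), mul_le_mul_of_nonneg_right hAC (sq_nonneg (A*C)),
      mul_le_mul_of_nonneg_right hAC (mul_nonneg hb (by linarith : (0:ℝ) ≤ A*C))]
  have hF1 : (0:ℝ) ≤ A + x₃ ^ 2 := by linarith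
  have hF2 : (0:ℝ) ≤ A * C + x₃ ^ 2 := by nlinarith
  have hF3 : (0:ℝ) ≤ C + x₃ ^ 2 := by linarith
  rw [ge_iff_le, show B + x₅ ^ 2 = C + x₃ ^ 2 from by rw [hB', hC']; ring]
  calc A ^ ((7:ℝ)/6) * B ^ ((7:ℝ)/6) * C ^ ((7:ℝ)/6)
      ≤ A ^ ((7:ℝ)/6) * B ^ ((4:ℝ)/3) * C ^ ((7:ℝ)/6) := by
        have hBe : B ^ ((7:ℝ)/6) ≤ B ^ ((4:ℝ)/3) :=
          Real.rpow_le_rpow_of_exponent_le hB (by norm_num)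
        have h := mul_le_mul_of_nonneg_left hBe (Real.rpow_nonneg hA0.le ((7:ℝ)/6))
        exact mul_le_mul_of_nonneg_right h (Real.rpow_nonneg hC0.le ((7:ℝ)/6))
    _ = (A ^ ((1:ℝ)/2) * B ^ ((1:ℝ)/2)) * (A ^ ((2:ℝ)/3) * C ^ ((2:ℝ)/3) * B ^ ((1:ℝ)/3))
          * (B ^ ((1:ℝ)/2) * C ^ ((1:ℝ)/2)) := by
        have eA : A ^ ((7:ℝ)/6) = A ^ ((1:ℝ)/2) * A ^ ((2:ℝ)/3) := by
          rw [← Real.rpow_add hA0]; norm_num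
        have eB : B ^ ((4:ℝ)/3) = B ^ ((1:ℝ)/2) * B ^ ((1:ℝ)/3) * B ^ ((1:ℝ)/2) := by
          rw [← Real.rpow_add hB0, ← Real.rpow_add hB0]; norm_num
        have eC : C ^ ((7:ℝ)/6) = C ^ ((2:ℝ)/3) * C ^ ((1:ℝ)/2) := by
          rw [← Real.rpow_add hC0]; norm_num
        rw [eA, eB, eC]; ring
    _ ≤ (A + x₃ ^ 2) * (A * C + x₃ ^ 2) * (C + x₃ ^ 2) :=
        mul_le_mul (mul_le_mul h1 h2 (by positivity) hF1) h3 (by positivity)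
          (mul_nonneg hF1 hF2)
end

section
/- Let φ(x₂, x₃, x₅) = (1 + x₂² + x₃²)·((1 + x₂²)(1 + x₅²) + x₃²)·(1 + x₃² + x₅²). Then for every d > 0, the integral ∫_{ℝ³} φ(x₂, x₃, x₅)^{-1/2} (1 + (1/2)·log φ(x₂, x₃, x₅))^{d} dx₂ dx₃ dx₅ is finite. -/
open MeasureTheory

private lemma one_dim_int :
    Integrable (fun x : ℝ => (1 + x ^ 2) ^ (-(9 : ℝ) / 16)) volume := by
  have h := integrable_rpow_neg_one_add_norm_sq (E := ℝ) (μ := volume) (r := (9 : ℝ) / 8)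
    (by simp; norm_num)
  have : (-(9 : ℝ) / 16) = -((9 : ℝ) / 8) / 2 := by norm_num
  rw [this]
  simpa [Real.norm_eq_abs, sq_abs] using h

private lemma poly_lower (u v w : ℝ) :
    ((1 + u ^ 2) * (1 + v ^ 2) * (1 + w ^ 2)) ^ 5 ≤
      ((1 + u ^ 2 + v ^ 2) * ((1 + u ^ 2) * (1 + w ^ 2) + v ^ 2) * (1 + v ^ 2 + w ^ 2)) ^ 4 := by
  have h1 : (1 + u ^ 2) * (1 + v ^ 2) ≤ (1 + u ^ 2 + v ^ 2) ^ 2 := by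
    nlinarith [sq_nonneg u, sq_nonneg v, sq_nonneg (u * v)]
  have hP1 : 1 ≤ (1 + u ^ 2) * (1 + w ^ 2) := by nlinarith [sq_nonneg u, sq_nonneg w, sq_nonneg (u*w)]
  have h2 : (1 + u ^ 2) * (1 + w ^ 2) * (1 + v ^ 2) ≤
      ((1 + u ^ 2) * (1 + w ^ 2) + v ^ 2) ^ 2 := by
    nlinarith [sq_nonneg v, mul_nonneg (le_trans zero_le_one hP1) (sq_nonneg v)]
  have h3 : (1 + u ^ 2) ^ 2 * (1 + w ^ 2) ^ 2 ≤ ((1 + u ^ 2) * (1 + w ^ 2) + v ^ 2) ^ 2 := by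
    nlinarith [sq_nonneg v, mul_nonneg (le_trans zero_le_one hP1) (sq_nonneg v)]
  have h4 : (1 + v ^ 2) * (1 + w ^ 2) ≤ (1 + v ^ 2 + w ^ 2) ^ 2 := by
    nlinarith [sq_nonneg v, sq_nonneg w, sq_nonneg (v * w)]
  have m1 : ((1 + u ^ 2) * (1 + v ^ 2)) ^ 2 ≤ ((1 + u ^ 2 + v ^ 2) ^ 2) ^ 2 :=
    pow_le_pow_left₀ (by positivity) h1 2
  have m4 : ((1 + v ^ 2) * (1 + w ^ 2)) ^ 2 ≤ ((1 + v ^ 2 + w ^ 2) ^ 2) ^ 2 :=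
    pow_le_pow_left₀ (by positivity) h4 2
  calc ((1 + u ^ 2) * (1 + v ^ 2) * (1 + w ^ 2)) ^ 5
      = ((1 + u ^ 2) * (1 + v ^ 2)) ^ 2 *
        ((1 + u ^ 2) * (1 + w ^ 2) * (1 + v ^ 2) * ((1 + u ^ 2) ^ 2 * (1 + w ^ 2) ^ 2)) *
        ((1 + v ^ 2) * (1 + w ^ 2)) ^ 2 := by ring
    _ ≤ ((1 + u ^ 2 + v ^ 2) ^ 2) ^ 2 *
        (((1 + u ^ 2) * (1 + w ^ 2) + v ^ 2) ^ 2 * ((1 + u ^ 2) * (1 + w ^ 2) + v ^ 2) ^ 2) *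
        ((1 + v ^ 2 + w ^ 2) ^ 2) ^ 2 := by
        apply mul_le_mul _ m4 (by positivity) (by positivity)
        exact mul_le_mul m1 (mul_le_mul h2 h3 (by positivity) (by positivity))
          (by positivity) (by positivity)
    _ = ((1 + u ^ 2 + v ^ 2) * ((1 + u ^ 2) * (1 + w ^ 2) + v ^ 2) * (1 + v ^ 2 + w ^ 2)) ^ 4 := by
        ring

private lemma phi_ge_one (u v w : ℝ) :
    1 ≤ (1 + u ^ 2 + v ^ 2) * ((1 + u ^ 2) * (1 + w ^ 2) + v ^ 2) * (1 + v ^ 2 + w ^ 2) := by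
  have hA : (1 : ℝ) ≤ 1 + u ^ 2 + v ^ 2 := by nlinarith [sq_nonneg u, sq_nonneg v]
  have hB : (1 : ℝ) ≤ (1 + u ^ 2) * (1 + w ^ 2) + v ^ 2 := by
    nlinarith [sq_nonneg u, sq_nonneg w, sq_nonneg v, mul_nonneg (sq_nonneg u) (sq_nonneg w)]
  have hC : (1 : ℝ) ≤ 1 + v ^ 2 + w ^ 2 := by nlinarith [sq_nonneg v, sq_nonneg w]
  calc (1 : ℝ) = 1 * 1 * 1 := by ring
    _ ≤ (1 + u ^ 2 + v ^ 2) * ((1 + u ^ 2) * (1 + w ^ 2) + v ^ 2) * (1 + v ^ 2 + w ^ 2) :=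
      mul_le_mul (mul_le_mul hA hB zero_le_one (by linarith)) hC zero_le_one (by positivity)

private lemma aux_bound (d : ℝ) (hd : 0 < d) (φ Q : ℝ) (hφ1 : 1 ≤ φ) (hQ1 : 1 ≤ Q)
    (hpoly : Q ^ (5 : ℕ) ≤ φ ^ (4 : ℕ)) (hup : φ ≤ Q ^ (3 : ℕ)) :
    φ ^ (-(1 : ℝ) / 2) * (1 + (1 / 2) * Real.log φ) ^ d ≤
      (1 + 24 * d) ^ d * Q ^ (-(9 : ℝ) / 16) := by
  have hQ0 : (0 : ℝ) < Q := lt_of_lt_of_le one_pos hQ1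
  have hφ0 : (0 : ℝ) < φ := lt_of_lt_of_le one_pos hφ1
  have e1 : φ ^ (-(1 : ℝ) / 2) = (φ ^ (4 : ℕ)) ^ (-(1 : ℝ) / 8) := by
    rw [← Real.rpow_natCast φ 4, ← Real.rpow_mul hφ0.le]
    norm_num
  have e2 : Q ^ (-(5 : ℝ) / 8) = (Q ^ (5 : ℕ)) ^ (-(1 : ℝ) / 8) := by
    rw [← Real.rpow_natCast Q 5, ← Real.rpow_mul hQ0.le]
    norm_num
  have step1 : φ ^ (-(1 : ℝ) / 2) ≤ Q ^ (-(5 : ℝ) / 8) := by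
    rw [e1, e2]
    exact Real.rpow_le_rpow_of_nonpos (by positivity) hpoly (by norm_num)
  have hlogφ : Real.log φ ≤ 3 * Real.log Q := by
    calc Real.log φ ≤ Real.log (Q ^ (3 : ℕ)) := Real.log_le_log hφ0 hup
      _ = 3 * Real.log Q := by rw [Real.log_pow]; push_cast; ring
  have hlognn : 0 ≤ Real.log φ := Real.log_nonneg hφ1
  set s := Q ^ ((1 : ℝ) / (16 * d)) with hs
  have hs1 : 1 ≤ s := Real.one_le_rpow hQ1 (by positivity)
  have hlogQ : Real.log Q ≤ 16 * d * (s - 1) := by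
    have h0 : Real.log s = (1 / (16 * d)) * Real.log Q := Real.log_rpow hQ0 _
    have h1 : Real.log s ≤ s - 1 := Real.log_le_sub_one_of_pos (by linarith)
    have hd16 : (0 : ℝ) < 16 * d := by linarith
    calc Real.log Q = 16 * d * Real.log s := by rw [h0]; field_simp
      _ ≤ 16 * d * (s - 1) := by nlinarith
  have hbase : 1 + (1 / 2) * Real.log φ ≤ (1 + 24 * d) * s := by nlinarith
  have step2 : (1 + (1 / 2) * Real.log φ) ^ d ≤ (1 + 24 * d) ^ d * Q ^ ((1 : ℝ) / 16) := by
    have h1 : (1 + (1 / 2) * Real.log φ) ^ d ≤ ((1 + 24 * d) * s) ^ d :=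
      Real.rpow_le_rpow (by linarith) hbase hd.le
    have h2 : ((1 + 24 * d) * s) ^ d = (1 + 24 * d) ^ d * s ^ d :=
      Real.mul_rpow (by linarith) (by linarith)
    have h3 : s ^ d = Q ^ ((1 : ℝ) / 16) := by
      rw [hs, ← Real.rpow_mul hQ0.le]
      congr 1
      field_simp
    rw [h2, h3] at h1
    exact h1
  calc φ ^ (-(1 : ℝ) / 2) * (1 + (1 / 2) * Real.log φ) ^ d
      ≤ Q ^ (-(5 : ℝ) / 8) * ((1 + 24 * d) ^ d * Q ^ ((1 : ℝ) / 16)) := by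
        apply mul_le_mul step1 step2 (Real.rpow_nonneg (by linarith) d) (by positivity)
    _ = (1 + 24 * d) ^ d * (Q ^ (-(5 : ℝ) / 8) * Q ^ ((1 : ℝ) / 16)) := by ring
    _ = (1 + 24 * d) ^ d * Q ^ (-(9 : ℝ) / 16) := by
        rw [← Real.rpow_add hQ0]
        norm_num

private lemma ptwise (d : ℝ) (hd : 0 < d) (u v w : ℝ) :
    ((1 + u ^ 2 + v ^ 2) * ((1 + u ^ 2) * (1 + w ^ 2) + v ^ 2) * (1 + v ^ 2 + w ^ 2)) ^ (-(1 : ℝ) / 2) *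
      (1 + (1 / 2) * Real.log ((1 + u ^ 2 + v ^ 2) * ((1 + u ^ 2) * (1 + w ^ 2) + v ^ 2) *
        (1 + v ^ 2 + w ^ 2))) ^ d ≤
    (1 + 24 * d) ^ d *
      ((1 + u ^ 2) ^ (-(9 : ℝ) / 16) * ((1 + v ^ 2) ^ (-(9 : ℝ) / 16) * (1 + w ^ 2) ^ (-(9 : ℝ) / 16))) := by
  have hQ1 : (1 : ℝ) ≤ (1 + u ^ 2) * (1 + v ^ 2) * (1 + w ^ 2) := by
    calc (1 : ℝ) = 1 * 1 * 1 := by ring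
      _ ≤ (1 + u ^ 2) * (1 + v ^ 2) * (1 + w ^ 2) := by
          apply mul_le_mul (mul_le_mul (by nlinarith [sq_nonneg u]) (by nlinarith [sq_nonneg v])
            zero_le_one (by positivity)) (by nlinarith [sq_nonneg w]) zero_le_one (by positivity)
  have hup : (1 + u ^ 2 + v ^ 2) * ((1 + u ^ 2) * (1 + w ^ 2) + v ^ 2) * (1 + v ^ 2 + w ^ 2) ≤
      ((1 + u ^ 2) * (1 + v ^ 2) * (1 + w ^ 2)) ^ (3 : ℕ) := by
    have hA : 1 + u ^ 2 + v ^ 2 ≤ (1 + u ^ 2) * (1 + v ^ 2) * (1 + w ^ 2) := by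
      nlinarith [mul_nonneg (sq_nonneg u) (sq_nonneg v), mul_nonneg (sq_nonneg u) (sq_nonneg w),
        mul_nonneg (sq_nonneg v) (sq_nonneg w), sq_nonneg w,
        mul_nonneg (mul_nonneg (sq_nonneg u) (sq_nonneg v)) (sq_nonneg w)]
    have hB : (1 + u ^ 2) * (1 + w ^ 2) + v ^ 2 ≤ (1 + u ^ 2) * (1 + v ^ 2) * (1 + w ^ 2) := by
      nlinarith [mul_nonneg (sq_nonneg u) (sq_nonneg v), mul_nonneg (sq_nonneg v) (sq_nonneg w),
        mul_nonneg (mul_nonneg (sq_nonneg u) (sq_nonneg v)) (sq_nonneg w)]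
    have hC : 1 + v ^ 2 + w ^ 2 ≤ (1 + u ^ 2) * (1 + v ^ 2) * (1 + w ^ 2) := by
      nlinarith [mul_nonneg (sq_nonneg u) (sq_nonneg v), mul_nonneg (sq_nonneg u) (sq_nonneg w),
        mul_nonneg (sq_nonneg v) (sq_nonneg w), sq_nonneg u,
        mul_nonneg (mul_nonneg (sq_nonneg u) (sq_nonneg v)) (sq_nonneg w)]
    calc (1 + u ^ 2 + v ^ 2) * ((1 + u ^ 2) * (1 + w ^ 2) + v ^ 2) * (1 + v ^ 2 + w ^ 2)
        ≤ ((1 + u ^ 2) * (1 + v ^ 2) * (1 + w ^ 2)) * ((1 + u ^ 2) * (1 + v ^ 2) * (1 + w ^ 2)) *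
          ((1 + u ^ 2) * (1 + v ^ 2) * (1 + w ^ 2)) := by
          apply mul_le_mul (mul_le_mul hA hB (by positivity) (by positivity)) hC
            (by positivity) (by positivity)
      _ = ((1 + u ^ 2) * (1 + v ^ 2) * (1 + w ^ 2)) ^ (3 : ℕ) := by ring
  have h := aux_bound d hd
    ((1 + u ^ 2 + v ^ 2) * ((1 + u ^ 2) * (1 + w ^ 2) + v ^ 2) * (1 + v ^ 2 + w ^ 2))
    ((1 + u ^ 2) * (1 + v ^ 2) * (1 + w ^ 2))
    (phi_ge_one u v w) hQ1 (poly_lower u v w) hup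
  calc ((1 + u ^ 2 + v ^ 2) * ((1 + u ^ 2) * (1 + w ^ 2) + v ^ 2) * (1 + v ^ 2 + w ^ 2)) ^ (-(1 : ℝ) / 2) *
      (1 + (1 / 2) * Real.log ((1 + u ^ 2 + v ^ 2) * ((1 + u ^ 2) * (1 + w ^ 2) + v ^ 2) *
        (1 + v ^ 2 + w ^ 2))) ^ d
      ≤ (1 + 24 * d) ^ d * ((1 + u ^ 2) * (1 + v ^ 2) * (1 + w ^ 2)) ^ (-(9 : ℝ) / 16) := h
    _ = (1 + 24 * d) ^ d *
        ((1 + u ^ 2) ^ (-(9 : ℝ) / 16) * ((1 + v ^ 2) ^ (-(9 : ℝ) / 16) * (1 + w ^ 2) ^ (-(9 : ℝ) / 16))) := by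
        rw [Real.mul_rpow (by positivity) (by positivity),
          Real.mul_rpow (by positivity) (by positivity)]
        ring

theorem stmt_2 (d : ℝ) (hd : 0 < d) :
    Integrable (fun x : ℝ × ℝ × ℝ =>
      ((1 + x.1 ^ 2 + x.2.1 ^ 2) * ((1 + x.1 ^ 2) * (1 + x.2.2 ^ 2) + x.2.1 ^ 2) *
          (1 + x.2.1 ^ 2 + x.2.2 ^ 2)) ^ (-(1 : ℝ) / 2) *
        (1 + (1 / 2) * Real.log ((1 + x.1 ^ 2 + x.2.1 ^ 2) *
          ((1 + x.1 ^ 2) * (1 + x.2.2 ^ 2) + x.2.1 ^ 2) *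
          (1 + x.2.1 ^ 2 + x.2.2 ^ 2))) ^ d) volume := by
  have hg : Integrable (fun x : ℝ × ℝ × ℝ =>
      (1 + 24 * d) ^ d * ((1 + x.1 ^ 2) ^ (-(9 : ℝ) / 16) *
        ((1 + x.2.1 ^ 2) ^ (-(9 : ℝ) / 16) * (1 + x.2.2 ^ 2) ^ (-(9 : ℝ) / 16)))) volume := by
    apply Integrable.const_mul
    exact one_dim_int.mul_prod (one_dim_int.mul_prod one_dim_int)
  have hφpos : ∀ x : ℝ × ℝ × ℝ, 0 < (1 + x.1 ^ 2 + x.2.1 ^ 2) *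
      ((1 + x.1 ^ 2) * (1 + x.2.2 ^ 2) + x.2.1 ^ 2) * (1 + x.2.1 ^ 2 + x.2.2 ^ 2) := by
    intro x; positivity
  have hφ1 : ∀ x : ℝ × ℝ × ℝ, 1 ≤ (1 + x.1 ^ 2 + x.2.1 ^ 2) *
      ((1 + x.1 ^ 2) * (1 + x.2.2 ^ 2) + x.2.1 ^ 2) * (1 + x.2.1 ^ 2 + x.2.2 ^ 2) := by
    intro x
    exact phi_ge_one x.1 x.2.1 x.2.2
  apply hg.mono'
  · have hcφ : Continuous (fun x : ℝ × ℝ × ℝ => (1 + x.1 ^ 2 + x.2.1 ^ 2) *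
        ((1 + x.1 ^ 2) * (1 + x.2.2 ^ 2) + x.2.1 ^ 2) * (1 + x.2.1 ^ 2 + x.2.2 ^ 2)) := by
      fun_prop
    apply Continuous.aestronglyMeasurable
    apply Continuous.mul
    · exact hcφ.rpow_const (fun x => Or.inl (hφpos x).ne')
    · apply Continuous.rpow_const
      · exact continuous_const.add (continuous_const.mul (hcφ.log (fun x => (hφpos x).ne')))
      · intro x
        exact Or.inl (ne_of_gt (by have := Real.log_nonneg (hφ1 x); linarith))
  · filter_upwards with x
    have hnn : 0 ≤ ((1 + x.1 ^ 2 + x.2.1 ^ 2) * ((1 + x.1 ^ 2) * (1 + x.2.2 ^ 2) + x.2.1 ^ 2) *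
          (1 + x.2.1 ^ 2 + x.2.2 ^ 2)) ^ (-(1 : ℝ) / 2) *
        (1 + (1 / 2) * Real.log ((1 + x.1 ^ 2 + x.2.1 ^ 2) *
          ((1 + x.1 ^ 2) * (1 + x.2.2 ^ 2) + x.2.1 ^ 2) *
          (1 + x.2.1 ^ 2 + x.2.2 ^ 2))) ^ d := by
      apply mul_nonneg (Real.rpow_nonneg (hφpos x).le _)
      apply Real.rpow_nonneg
      have := Real.log_nonneg (hφ1 x)
      linarith
    rw [Real.norm_eq_abs, abs_of_nonneg hnn]
    exact ptwise d hd x.1 x.2.1 x.2.2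
end

section
/- Let Φ(y, z) = (1 + y² + z²)·((1 + y²)² + z²) for y, z ∈ ℝ. Then for every real number r, the integral ∫_{ℝ²} Φ(y, z)^{-1/2} (1 + (1/2)·log Φ(y, z))^{r} dy dz is finite. -/
open MeasureTheory

lemma aux_integrable_one_add_sq (p : ℝ) (hp : 1 < 2 * p) :
    Integrable (fun y : ℝ => (1 + y ^ 2) ^ (-p)) volume := by
  have hp0 : 0 ≤ p := by linarith
  have h : Integrable (fun y : ℝ => (1 + ‖y‖) ^ (-(2 * p))) (volume : Measure ℝ) := by
    apply integrable_one_add_norm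
    simp [hp]
  refine (h.const_mul ((2 : ℝ) ^ p)).mono' ?_ ?_
  · apply Continuous.aestronglyMeasurable
    apply Continuous.rpow_const (by fun_prop)
    intro y; left; positivity
  · filter_upwards with y
    have h1 : (0 : ℝ) < 1 + y ^ 2 := by positivity
    have h2 : (0 : ℝ) < 1 + ‖y‖ := by positivity
    have hsq : (1 + ‖y‖) ^ 2 ≤ 2 * (1 + y ^ 2) := by
      have : ‖y‖ ^ 2 = y ^ 2 := by
        rw [Real.norm_eq_abs, sq_abs]
      nlinarith [norm_nonneg y, sq_nonneg (‖y‖ - 1)]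
    have key : (2 * (1 + y ^ 2)) ^ (-p) ≤ ((1 + ‖y‖) ^ 2) ^ (-p) :=
      Real.rpow_le_rpow_of_nonpos (by positivity) hsq (by linarith)
    have e1 : (2 * (1 + y ^ 2)) ^ (-p) = 2 ^ (-p) * (1 + y ^ 2) ^ (-p) :=
      Real.mul_rpow (by norm_num) h1.le
    have e2 : ((1 + ‖y‖) ^ 2) ^ (-p) = (1 + ‖y‖) ^ (-(2 * p)) := by
      rw [← Real.rpow_natCast (1 + ‖y‖) 2, ← Real.rpow_mul h2.le]
      norm_num
    rw [Real.norm_eq_abs, abs_of_nonneg (Real.rpow_nonneg h1.le _)]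
    have h2p : (0 : ℝ) < 2 ^ (-p) := Real.rpow_pos_of_pos (by norm_num) _
    have h2p' : (2 : ℝ) ^ p * 2 ^ (-p) = 1 := by
      rw [← Real.rpow_add (by norm_num)]; simp
    calc (1 + y ^ 2) ^ (-p) = 2 ^ p * (2 ^ (-p) * (1 + y ^ 2) ^ (-p)) := by
          rw [← mul_assoc, h2p']; ring
      _ ≤ 2 ^ p * ((1 + ‖y‖) ^ (-(2 * p))) := by
          rw [← e1]
          apply mul_le_mul_of_nonneg_left _ (Real.rpow_nonneg (by norm_num) p)
          rw [← e2]; exact key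

lemma aux_log_bound (r t δ : ℝ) (ht : 1 ≤ t) (hδ : 0 < δ) :
    (1 + (1 / 2) * Real.log t) ^ r ≤ (1 + 1 / (2 * δ)) ^ |r| * t ^ (δ * |r|) := by
  have hlog : 0 ≤ Real.log t := Real.log_nonneg ht
  have hb : (1 : ℝ) ≤ 1 + (1 / 2) * Real.log t := by linarith
  have h1 : (1 + (1 / 2) * Real.log t) ^ r ≤ (1 + (1 / 2) * Real.log t) ^ |r| :=
    Real.rpow_le_rpow_of_exponent_le hb (le_abs_self r)
  have htδ : (1 : ℝ) ≤ t ^ δ := by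
    rw [show (1 : ℝ) = 1 ^ δ from (Real.one_rpow δ).symm]
    exact Real.rpow_le_rpow zero_le_one ht hδ.le
  have hlog2 : Real.log t ≤ t ^ δ / δ := Real.log_le_rpow_div (by linarith) hδ
  have hc : (0 : ℝ) ≤ 1 / (2 * δ) := by positivity
  have hb2 : 1 + (1 / 2) * Real.log t ≤ (1 + 1 / (2 * δ)) * t ^ δ := by
    have e : (1 + 1 / (2 * δ)) * t ^ δ = t ^ δ + (1 / 2) * (t ^ δ / δ) := by
      field_simp
    rw [e]; nlinarith
  calc (1 + (1 / 2) * Real.log t) ^ r ≤ (1 + (1 / 2) * Real.log t) ^ |r| := h1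
    _ ≤ ((1 + 1 / (2 * δ)) * t ^ δ) ^ |r| :=
        Real.rpow_le_rpow (by linarith) hb2 (abs_nonneg r)
    _ = (1 + 1 / (2 * δ)) ^ |r| * (t ^ δ) ^ |r| :=
        Real.mul_rpow (by linarith) (by linarith)
    _ = (1 + 1 / (2 * δ)) ^ |r| * t ^ (δ * |r|) := by
        rw [← Real.rpow_mul (by linarith : (0 : ℝ) ≤ t)]

theorem stmt_7 (r : ℝ) :
    Integrable (fun x : ℝ × ℝ =>
      ((1 + x.1 ^ 2 + x.2 ^ 2) * ((1 + x.1 ^ 2) ^ 2 + x.2 ^ 2)) ^ (-(1 : ℝ) / 2) *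
        (1 + (1 / 2) * Real.log ((1 + x.1 ^ 2 + x.2 ^ 2) *
          ((1 + x.1 ^ 2) ^ 2 + x.2 ^ 2))) ^ r) volume := by
  set δ : ℝ := 1 / (20 * (|r| + 1)) with hδdef
  have habs : (0 : ℝ) ≤ |r| := abs_nonneg r
  have hδ : 0 < δ := by rw [hδdef]; positivity
  set C : ℝ := (1 + 1 / (2 * δ)) ^ |r| with hCdef
  have hC : 0 ≤ C := Real.rpow_nonneg (by positivity) _
  have hδr : δ * |r| ≤ 1 / 20 := by
    rw [hδdef, div_mul_eq_mul_div, div_le_div_iff₀ (by positivity) (by norm_num)]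
    nlinarith
  -- the dominating function
  have hg : Integrable (fun x : ℝ × ℝ =>
      C * ((1 + x.1 ^ 2) ^ (-(27 / 40 : ℝ)) * (1 + x.2 ^ 2) ^ (-(9 / 16 : ℝ)))) volume := by
    have h1 := aux_integrable_one_add_sq (27 / 40) (by norm_num)
    have h2 := aux_integrable_one_add_sq (9 / 16) (by norm_num)
    rw [show (volume : Measure (ℝ × ℝ)) = volume.prod volume from Measure.volume_eq_prod ℝ ℝ]
    exact (h1.mul_prod h2).const_mul C
  refine hg.mono' ?_ ?_
  · apply Continuous.aestronglyMeasurable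
    have hc : Continuous (fun x : ℝ × ℝ =>
        (1 + x.1 ^ 2 + x.2 ^ 2) * ((1 + x.1 ^ 2) ^ 2 + x.2 ^ 2)) := by fun_prop
    have hpos : ∀ x : ℝ × ℝ,
        (0:ℝ) < (1 + x.1 ^ 2 + x.2 ^ 2) * ((1 + x.1 ^ 2) ^ 2 + x.2 ^ 2) := by
      intro x; positivity
    have hlogc : Continuous (fun x : ℝ × ℝ =>
        1 + (1 / 2) * Real.log ((1 + x.1 ^ 2 + x.2 ^ 2) * ((1 + x.1 ^ 2) ^ 2 + x.2 ^ 2))) :=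
      continuous_const.add (continuous_const.mul (hc.log (fun x => (hpos x).ne')))
    apply Continuous.mul
    · exact hc.rpow_const (fun x => Or.inl (hpos x).ne')
    · apply hlogc.rpow_const
      intro x; left
      have h1 : (1:ℝ) ≤ (1 + x.1 ^ 2 + x.2 ^ 2) * ((1 + x.1 ^ 2) ^ 2 + x.2 ^ 2) := by
        nlinarith [sq_nonneg x.1, sq_nonneg x.2, sq_nonneg (x.1*x.2)]
      have := Real.log_nonneg h1
      positivity
  · filter_upwards with x
    set u : ℝ := 1 + x.1 ^ 2 with hu'
    set v : ℝ := 1 + x.2 ^ 2 with hv'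
    have hu : (1 : ℝ) ≤ u := by rw [hu']; nlinarith [sq_nonneg x.1]
    have hv : (1 : ℝ) ≤ v := by rw [hv']; nlinarith [sq_nonneg x.2]
    set Φ : ℝ := (1 + x.1 ^ 2 + x.2 ^ 2) * ((1 + x.1 ^ 2) ^ 2 + x.2 ^ 2) with hΦ'
    have hΦ1 : (1 : ℝ) ≤ Φ := by
      rw [hΦ']; nlinarith [sq_nonneg x.1, sq_nonneg x.2, sq_nonneg (x.1 * x.2)]
    have hΦ0 : (0 : ℝ) < Φ := lt_of_lt_of_le one_pos hΦ1
    have h1 : u ^ 2 * v ≤ Φ := by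
      rw [hu', hv', hΦ']; nlinarith [sq_nonneg x.1, sq_nonneg x.2, sq_nonneg (x.1 * x.2),
        sq_nonneg (x.1 ^ 2 * x.2)]
    have h2 : v ^ 2 ≤ Φ := by
      rw [hv', hΦ']; nlinarith [sq_nonneg x.1, sq_nonneg x.2, sq_nonneg (x.1 * x.2),
        sq_nonneg (x.1 ^ 2 * x.2)]
    have hpow : u ^ 6 * v ^ 5 ≤ Φ ^ 4 := by
      have e : u ^ 6 * v ^ 5 = (u ^ 2 * v) ^ 3 * v ^ 2 := by ring
      have h3 : (u ^ 2 * v) ^ 3 ≤ Φ ^ 3 := pow_le_pow_left₀ (by positivity) h1 3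
      calc u ^ 6 * v ^ 5 = (u ^ 2 * v) ^ 3 * v ^ 2 := e
        _ ≤ Φ ^ 3 * Φ := mul_le_mul h3 h2 (by positivity) (by positivity)
        _ = Φ ^ 4 := by ring
    -- step A : bound the log factor
    have hA : (1 + (1 / 2) * Real.log Φ) ^ r ≤ C * Φ ^ (δ * |r|) :=
      aux_log_bound r Φ δ hΦ1 hδ
    -- step D : bound Φ^(-9/20)
    have hD : Φ ^ (-(9 / 20 : ℝ)) ≤ u ^ (-(27 / 40 : ℝ)) * v ^ (-(9 / 16 : ℝ)) := by
      have e1 : Φ ^ (-(9 / 20 : ℝ)) = (Φ ^ 4) ^ (-(9 / 80 : ℝ)) := by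
        rw [← Real.rpow_natCast Φ 4, ← Real.rpow_mul hΦ0.le]
        norm_num
      have e2 : (Φ ^ 4) ^ (-(9 / 80 : ℝ)) ≤ (u ^ 6 * v ^ 5) ^ (-(9 / 80 : ℝ)) :=
        Real.rpow_le_rpow_of_nonpos (by positivity) hpow (by norm_num)
      have e3 : (u ^ 6 * v ^ 5 : ℝ) ^ (-(9 / 80 : ℝ))
          = u ^ (-(27 / 40 : ℝ)) * v ^ (-(9 / 16 : ℝ)) := by
        rw [Real.mul_rpow (by positivity) (by positivity),
          ← Real.rpow_natCast u 6, ← Real.rpow_natCast v 5,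
          ← Real.rpow_mul (by positivity : (0:ℝ) ≤ u),
          ← Real.rpow_mul (by positivity : (0:ℝ) ≤ v)]
        norm_num
      rw [e1, ← e3]; exact e2
    have hbase : (0 : ℝ) ≤ 1 + (1 / 2) * Real.log Φ := by
      have := Real.log_nonneg hΦ1; linarith
    rw [Real.norm_eq_abs, abs_of_nonneg (mul_nonneg (Real.rpow_nonneg hΦ0.le _)
      (Real.rpow_nonneg hbase _))]
    calc Φ ^ (-(1:ℝ)/2) * (1 + (1 / 2) * Real.log Φ) ^ r
        ≤ Φ ^ (-(1:ℝ)/2) * (C * Φ ^ (δ * |r|)) :=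
          mul_le_mul_of_nonneg_left hA (Real.rpow_nonneg hΦ0.le _)
      _ = C * Φ ^ (-(1:ℝ)/2 + δ * |r|) := by
          rw [Real.rpow_add hΦ0]; ring
      _ ≤ C * Φ ^ (-(9/20 : ℝ)) := by
          apply mul_le_mul_of_nonneg_left _ hC
          exact Real.rpow_le_rpow_of_exponent_le hΦ1 (by linarith)
      _ ≤ C * (u ^ (-(27 / 40 : ℝ)) * v ^ (-(9 / 16 : ℝ))) :=
          mul_le_mul_of_nonneg_left hD hC
end

section
/- Let n ≥ 1 be an integer. For all real numbers s, t ≥ 0, one has ((1 + s)² + t)·(1 + s + t)^{n} ≥ (1 + s)^{n + 1/6} (1 + t)^{7/6}. -/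
theorem stmt_8 (n : ℕ) (hn : 1 ≤ n) (s t : ℝ) (hs : 0 ≤ s) (ht : 0 ≤ t) :
    ((1 + s) ^ 2 + t) * (1 + s + t) ^ n ≥
      (1 + s) ^ ((n : ℝ) + 1 / 6) * (1 + t) ^ ((7 : ℝ) / 6) := by
  have hA0 : (0:ℝ) < 1 + s := by linarith
  have hT0 : (0:ℝ) < 1 + t := by linarith
  have hA1 : (1:ℝ) ≤ 1 + s := by linarith
  have hT1 : (1:ℝ) ≤ 1 + t := by linarith
  have hsq : ((1+s)^2 : ℝ) = (1+s) ^ (2:ℝ) := by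
    rw [← Real.rpow_natCast (1+s) 2]; norm_num
  -- Step 1: (1+s)^2 + t ≥ (1+s)^(2/3) * (1+t)^(2/3)
  have h1 : (1+s) ^ (2/3 : ℝ) * (1+t) ^ (2/3 : ℝ) ≤ (1 + s) ^ 2 + t := by
    rcases le_total (1+t) ((1+s)^2) with h | h
    · have hb : (1+t) ^ (2/3:ℝ) ≤ ((1+s) ^ (2:ℝ)) ^ (2/3:ℝ) := by
        apply Real.rpow_le_rpow hT0.le (hsq ▸ h) (by norm_num)
      have : (1+s) ^ (2/3:ℝ) * (1+t) ^ (2/3:ℝ)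
          ≤ (1+s) ^ (2/3:ℝ) * ((1+s) ^ (2:ℝ)) ^ (2/3:ℝ) := by
        apply mul_le_mul_of_nonneg_left hb (by positivity)
      have he : (1+s) ^ (2/3:ℝ) * ((1+s) ^ (2:ℝ)) ^ (2/3:ℝ) = (1+s) ^ (2:ℝ) := by
        rw [← Real.rpow_mul hA0.le, ← Real.rpow_add hA0]; norm_num
      rw [he] at this
      rw [← hsq] at this
      linarith
    · have hAle : (1+s) ^ (2/3:ℝ) ≤ (1+t) ^ (1/3:ℝ) := by
        have h2' : ((1+s) ^ (2:ℝ)) ^ (1/3:ℝ) ≤ (1+t) ^ (1/3:ℝ) :=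
          Real.rpow_le_rpow (by positivity) (hsq ▸ h) (by norm_num)
        rwa [← Real.rpow_mul hA0.le, show (2:ℝ) * (1/3) = 2/3 by norm_num] at h2'
      have : (1+s) ^ (2/3:ℝ) * (1+t) ^ (2/3:ℝ)
          ≤ (1+t) ^ (1/3:ℝ) * (1+t) ^ (2/3:ℝ) := by
        apply mul_le_mul_of_nonneg_right hAle (by positivity)
      have he : (1+t) ^ (1/3:ℝ) * (1+t) ^ (2/3:ℝ) = 1 + t := by
        rw [← Real.rpow_add hT0]; norm_num
      rw [he] at this
      nlinarith
  -- Step 2: 1+s+t ≥ (1+s)^(1/2) * (1+t)^(1/2)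
  have h2 : (1+s) ^ (1/2 : ℝ) * (1+t) ^ (1/2 : ℝ) ≤ 1 + s + t := by
    have hsq2 : (1+s) * (1+t) ≤ (1+s+t)^2 := by nlinarith
    have h' := Real.rpow_le_rpow (by positivity) hsq2 (by norm_num : (0:ℝ) ≤ 1/2)
    rwa [Real.mul_rpow hA0.le hT0.le, ← Real.rpow_natCast (1+s+t) 2,
      ← Real.rpow_mul (by linarith), show ((2:ℕ):ℝ) * (1/2) = 1 by norm_num,
      Real.rpow_one] at h'
  -- Step 3: (1+s+t)^(n-1) ≥ (1+s)^(n-1)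
  have h3 : (1+s) ^ ((n:ℝ) - 1) ≤ (1+s+t) ^ (n-1) := by
    have hle : (1+s) ^ (n-1) ≤ (1+s+t) ^ (n-1) := by
      apply pow_le_pow_left₀ hA0.le; linarith
    have hc : (1+s) ^ ((n:ℝ) - 1) = (1+s) ^ (n-1) := by
      rw [← Real.rpow_natCast (1+s) (n-1), Nat.cast_sub hn, Nat.cast_one]
    rw [hc]; exact hle
  have hpow : (1+s+t) ^ n = (1+s+t) ^ (n-1) * (1+s+t) := by
    rw [← pow_succ, Nat.sub_add_cancel hn]
  have hmid : (1+s) ^ ((n:ℝ) - 1) * ((1+s) ^ (1/2 : ℝ) * (1+t) ^ (1/2 : ℝ))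
      ≤ (1+s+t) ^ (n-1) * (1+s+t) :=
    mul_le_mul h3 h2 (by positivity) (by positivity)
  have key : ((1+s) ^ (2/3 : ℝ) * (1+t) ^ (2/3 : ℝ)) *
      ((1+s) ^ ((n:ℝ) - 1) * ((1+s) ^ (1/2 : ℝ) * (1+t) ^ (1/2 : ℝ)))
      ≤ ((1 + s) ^ 2 + t) * (1 + s + t) ^ n := by
    rw [hpow]
    exact mul_le_mul h1 hmid (by positivity) (by positivity)
  have heq : ((1+s) ^ (2/3 : ℝ) * (1+t) ^ (2/3 : ℝ)) *
      ((1+s) ^ ((n:ℝ) - 1) * ((1+s) ^ (1/2 : ℝ) * (1+t) ^ (1/2 : ℝ)))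
      = (1 + s) ^ ((n : ℝ) + 1 / 6) * (1 + t) ^ ((7 : ℝ) / 6) := by
    rw [show ((n:ℝ) + 1/6) = 2/3 + (((n:ℝ) - 1) + 1/2) by ring,
      show ((7:ℝ)/6) = 2/3 + 1/2 by norm_num,
      Real.rpow_add hA0, Real.rpow_add hA0, Real.rpow_add hT0]
    ring
  rw [ge_iff_le, ← heq]
  exact key
end

section
/- Let n ≥ 1 be an integer and let Ψ(y, z) = ((1 + ‖y‖²/2)² + z²)·(1 + z² + ‖y‖²/2)^{n} for y ∈ ℝⁿ and z ∈ ℝ. Then for every real number r, the integral ∫_{ℝⁿ × ℝ} Ψ(y, z)^{-1/2} (1 + (1/2)·log Ψ(y, z))^{r} dy dz is finite. -/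
open MeasureTheory

lemma aux_log_bound_s9 (r ε : ℝ) (hε : 0 < ε) :
    ∃ C : ℝ, 0 ≤ C ∧ ∀ x : ℝ, 1 ≤ x → (1 + 1/2 * Real.log x) ^ r ≤ C * x ^ ε := by
  rcases le_or_gt r 0 with hr | hr
  · refine ⟨1, zero_le_one, fun x hx => ?_⟩
    have hlog : 0 ≤ Real.log x := Real.log_nonneg hx
    have h1 : (1 + 1/2 * Real.log x) ^ r ≤ 1 :=
      Real.rpow_le_one_of_one_le_of_nonpos (by linarith) hr
    have h2 : (1:ℝ) ≤ x ^ ε := Real.one_le_rpow hx hε.le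
    linarith
  · set M : ℝ := max 1 (r/(2*ε)) with hM
    have hM1 : (1:ℝ) ≤ M := le_max_left _ _
    have hM2 : r/(2*ε) ≤ M := le_max_right _ _
    refine ⟨M ^ r, Real.rpow_nonneg (by linarith) r, fun x hx => ?_⟩
    have hxpos : (0:ℝ) < x := by linarith
    have hlog : 0 ≤ Real.log x := Real.log_nonneg hx
    set δ : ℝ := ε / r with hδ
    have hδpos : 0 < δ := div_pos hε hr
    have hexp : 1 + δ * Real.log x ≤ x ^ δ := by
      have h := Real.add_one_le_exp (δ * Real.log x)
      rw [Real.rpow_def_of_pos hxpos, mul_comm (Real.log x) δ]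
      linarith
    have hMδ : (1:ℝ)/2 ≤ M * δ := by
      have hq : r/(2*ε) * δ = 1/2 := by
        rw [hδ]; field_simp
      nlinarith [mul_le_mul_of_nonneg_right hM2 hδpos.le]
    have hbase : 1 + 1/2 * Real.log x ≤ M * x ^ δ := by
      have h1 : 1 + 1/2 * Real.log x ≤ M * (1 + δ * Real.log x) := by nlinarith
      have h2 : M * (1 + δ * Real.log x) ≤ M * x ^ δ :=
        mul_le_mul_of_nonneg_left hexp (by linarith)
      linarith
    calc (1 + 1/2 * Real.log x) ^ r ≤ (M * x ^ δ) ^ r :=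
          Real.rpow_le_rpow (by linarith) hbase hr.le
      _ = M ^ r * x ^ ε := by
          rw [Real.mul_rpow (by linarith) (Real.rpow_nonneg hxpos.le δ),
            ← Real.rpow_mul hxpos.le]
          congr 1
          rw [hδ]
          field_simp

set_option maxHeartbeats 1000000 in
theorem stmt_9 (n : ℕ) (hn : 1 ≤ n) (r : ℝ) :
    Integrable (fun p : EuclideanSpace ℝ (Fin n) × ℝ =>
      (((1 + ‖p.1‖ ^ 2 / 2) ^ 2 + p.2 ^ 2) * (1 + p.2 ^ 2 + ‖p.1‖ ^ 2 / 2) ^ n)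
          ^ (-(1 : ℝ) / 2) *
        (1 + (1 / 2) * Real.log (((1 + ‖p.1‖ ^ 2 / 2) ^ 2 + p.2 ^ 2) *
          (1 + p.2 ^ 2 + ‖p.1‖ ^ 2 / 2) ^ n)) ^ r) volume := by
  have hn1 : (1:ℝ) ≤ (n:ℝ) := by exact_mod_cast hn
  set ε : ℝ := 1/(8*(n:ℝ)+24) with hεdef
  have hε : 0 < ε := by rw [hεdef]; positivity
  have hεhalf : ε ≤ 1/32 := by
    rw [hεdef]
    rw [div_le_div_iff₀ (by linarith) (by norm_num)]
    linarith
  set sy : ℝ := ((n:ℝ) + 1/4)/2 with hsydef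
  set sz : ℝ := 9/16 with hszdef
  have hsy0 : 0 ≤ sy := by rw [hsydef]; linarith
  have hsz0 : (0:ℝ) ≤ sz := by norm_num [hszdef]
  -- exponent inequalities
  have hεmul : ε * (8*(n:ℝ)+24) = 1 := by
    rw [hεdef]; field_simp
  have heyineq : (4*(n:ℝ)+2)*(ε-1/2)/4 ≤ -sy := by
    rw [hsydef]
    nlinarith [hε, hn1, hεmul]
  have hezineq : 5*(ε-1/2)/4 ≤ -sz := by
    rw [hszdef]; linarith
  obtain ⟨C, hC0, hC⟩ := aux_log_bound_s9 r ε hε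
  -- integrable dominating function
  have hgy : Integrable (fun y : EuclideanSpace ℝ (Fin n) => ((1:ℝ)+‖y‖^2) ^ (-sy)) volume := by
    have h := integrable_rpow_neg_one_add_norm_sq (E := EuclideanSpace ℝ (Fin n))
      (μ := volume) (r := 2*sy) (by
        rw [finrank_euclideanSpace_fin, hsydef]; push_cast; linarith)
    have e : (fun y : EuclideanSpace ℝ (Fin n) => ((1:ℝ)+‖y‖^2) ^ (-sy))
        = fun y => ((1:ℝ)+‖y‖^2) ^ (-(2*sy)/2) := by
      funext y; congr 1; ring
    rw [e]; exact h
  have hgz : Integrable (fun z : ℝ => ((1:ℝ)+‖z‖^2) ^ (-sz)) volume := by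
    have h := integrable_rpow_neg_one_add_norm_sq (E := ℝ)
      (μ := volume) (r := 2*sz) (by
        rw [Module.finrank_self, hszdef]; norm_num)
    have e : (fun z : ℝ => ((1:ℝ)+‖z‖^2) ^ (-sz))
        = fun z => ((1:ℝ)+‖z‖^2) ^ (-(2*sz)/2) := by
      funext z; congr 1; ring
    rw [e]; exact h
  have hg : Integrable (fun p : EuclideanSpace ℝ (Fin n) × ℝ =>
      (C * 2 ^ sy) * (((1:ℝ)+‖p.1‖^2) ^ (-sy) * ((1:ℝ)+‖p.2‖^2) ^ (-sz))) volume := by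
    rw [Measure.volume_eq_prod]
    exact (hgy.mul_prod hgz).const_mul _
  refine hg.mono' ?_ (Filter.Eventually.of_forall fun p => ?_)
  · -- measurability
    apply Continuous.aestronglyMeasurable
    have hΨc : Continuous (fun p : EuclideanSpace ℝ (Fin n) × ℝ =>
        ((1 + ‖p.1‖ ^ 2 / 2) ^ 2 + p.2 ^ 2) * (1 + p.2 ^ 2 + ‖p.1‖ ^ 2 / 2) ^ n) := by
      fun_prop
    have hΨpos : ∀ p : EuclideanSpace ℝ (Fin n) × ℝ,
        0 < ((1 + ‖p.1‖ ^ 2 / 2) ^ 2 + p.2 ^ 2) * (1 + p.2 ^ 2 + ‖p.1‖ ^ 2 / 2) ^ n := by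
      intro p; positivity
    refine (hΨc.rpow_const fun p => Or.inl (ne_of_gt (hΨpos p))).mul
      ((continuous_const.add (continuous_const.mul (hΨc.log fun p => ne_of_gt (hΨpos p)))).rpow_const
        fun p => Or.inl ?_)
    have := hΨpos p
    have hlog : 0 ≤ Real.log (((1 + ‖p.1‖ ^ 2 / 2) ^ 2 + p.2 ^ 2) * (1 + p.2 ^ 2 + ‖p.1‖ ^ 2 / 2) ^ n) := by
      apply Real.log_nonneg
      have h1 : (1:ℝ) ≤ (1 + ‖p.1‖ ^ 2 / 2) ^ 2 + p.2 ^ 2 := by nlinarith [sq_nonneg (‖p.1‖), sq_nonneg p.2]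
      have h2 : (1:ℝ) ≤ (1 + p.2 ^ 2 + ‖p.1‖ ^ 2 / 2) ^ n :=
        one_le_pow₀ (by nlinarith [sq_nonneg (‖p.1‖), sq_nonneg p.2])
      nlinarith
    exact ne_of_gt (by simp only [Pi.add_apply, Pi.mul_apply]; linarith [hlog])
  · -- pointwise bound
    obtain ⟨y, z⟩ := p
    simp only
    set u : ℝ := 1 + ‖y‖ ^ 2 / 2 with hu_def
    set v : ℝ := 1 + z ^ 2 with hv_def
    have hu : (1:ℝ) ≤ u := by rw [hu_def]; nlinarith [sq_nonneg ‖y‖]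
    have hv : (1:ℝ) ≤ v := by rw [hv_def]; nlinarith [sq_nonneg z]
    have hu0 : (0:ℝ) < u := by linarith
    have hv0 : (0:ℝ) < v := by linarith
    set A : ℝ := u ^ 2 + z ^ 2 with hA_def
    set B : ℝ := v + ‖y‖ ^ 2 / 2 with hB_def
    have hA1 : (1:ℝ) ≤ A := by rw [hA_def]; nlinarith [sq_nonneg z]
    have hB1 : (1:ℝ) ≤ B := by rw [hB_def]; nlinarith [sq_nonneg ‖y‖]
    have hAu : u ^ 2 ≤ A := by rw [hA_def]; nlinarith [sq_nonneg z]
    have hAv : v ≤ A := by rw [hA_def, hv_def]; nlinarith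
    have hBu : u ≤ B := by rw [hB_def, hv_def, hu_def]; nlinarith [sq_nonneg z]
    have hBv : v ≤ B := by rw [hB_def]; nlinarith [sq_nonneg ‖y‖]
    have hΨ1 : (1:ℝ) ≤ A * B ^ n := one_le_mul_of_one_le_of_one_le hA1 (one_le_pow₀ hB1)
    have hΨ0 : (0:ℝ) < A * B ^ n := by linarith
    have hlogΨ : 0 ≤ Real.log (A * B ^ n) := Real.log_nonneg hΨ1
    have hkey : u ^ (4*n+2) * v ^ 5 ≤ (A * B ^ n) ^ 4 := by
      have hA4 : u ^ 6 * v ≤ A ^ 4 := by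
        rcases le_total v (u ^ 2) with h | h
        · calc u ^ 6 * v ≤ u ^ 6 * u ^ 2 :=
                mul_le_mul_of_nonneg_left h (by positivity)
            _ = (u ^ 2) ^ 4 := by ring
            _ ≤ A ^ 4 := pow_le_pow_left₀ (sq_nonneg u) hAu 4
        · calc u ^ 6 * v = (u ^ 2) ^ 3 * v := by ring
            _ ≤ v ^ 3 * v :=
                mul_le_mul_of_nonneg_right (pow_le_pow_left₀ (sq_nonneg u) h 3) (by linarith)
            _ = v ^ 4 := by ring
            _ ≤ A ^ 4 := pow_le_pow_left₀ (by linarith) hAv 4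
      have hB4 : u ^ (4*(n-1)) * v ^ 4 ≤ (B ^ n) ^ 4 := by
        calc u ^ (4*(n-1)) * v ^ 4 ≤ B ^ (4*(n-1)) * B ^ 4 :=
              mul_le_mul (pow_le_pow_left₀ (by linarith) hBu _)
                (pow_le_pow_left₀ (by linarith) hBv 4) (by positivity) (by positivity)
          _ = B ^ (4*(n-1)+4) := (pow_add B _ 4).symm
          _ = (B ^ n) ^ 4 := by rw [← pow_mul]; congr 1; omega
      calc u ^ (4*n+2) * v ^ 5 = (u ^ 6 * v) * (u ^ (4*(n-1)) * v ^ 4) := by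
            have hexp : 4*n+2 = 6 + 4*(n-1) := by omega
            rw [hexp, pow_add]; ring
        _ ≤ A ^ 4 * (B ^ n) ^ 4 :=
            mul_le_mul hA4 hB4 (by positivity) (by positivity)
        _ = (A * B ^ n) ^ 4 := (mul_pow A (B ^ n) 4).symm
    have hz2 : ‖z‖ ^ 2 = z ^ 2 := by rw [Real.norm_eq_abs, sq_abs]
    have hmain : (A * B ^ n) ^ (-(1:ℝ)/2 + ε) ≤ u ^ (-sy) * v ^ (-sz) := by
      have ha : (A * B ^ n) ^ (-(1:ℝ)/2 + ε) = ((A * B ^ n) ^ 4) ^ ((-(1:ℝ)/2 + ε)/4) := by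
        rw [← Real.rpow_natCast (A * B ^ n) 4, ← Real.rpow_mul hΨ0.le]
        congr 1
        push_cast
        ring
      have hb : ((A * B ^ n) ^ 4) ^ ((-(1:ℝ)/2 + ε)/4)
          ≤ (u ^ (4*n+2) * v ^ 5) ^ ((-(1:ℝ)/2 + ε)/4) :=
        Real.rpow_le_rpow_of_nonpos (by positivity) hkey (by linarith)
      have hc : (u ^ (4*n+2) * v ^ 5) ^ ((-(1:ℝ)/2 + ε)/4)
          = u ^ (((4*n+2 : ℕ) : ℝ) * ((-(1:ℝ)/2 + ε)/4)) * v ^ ((5:ℝ) * ((-(1:ℝ)/2 + ε)/4)) := by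
        rw [Real.mul_rpow (by positivity) (by positivity),
          ← Real.rpow_natCast u (4*n+2), ← Real.rpow_natCast v 5,
          ← Real.rpow_mul hu0.le, ← Real.rpow_mul hv0.le]
        norm_num
      have hd : u ^ (((4*n+2 : ℕ) : ℝ) * ((-(1:ℝ)/2 + ε)/4)) ≤ u ^ (-sy) := by
        apply Real.rpow_le_rpow_of_exponent_le hu
        push_cast
        nlinarith [heyineq]
      have he : v ^ ((5:ℝ) * ((-(1:ℝ)/2 + ε)/4)) ≤ v ^ (-sz) := by
        apply Real.rpow_le_rpow_of_exponent_le hv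
        nlinarith [hezineq]
      calc (A * B ^ n) ^ (-(1:ℝ)/2 + ε) = ((A * B ^ n) ^ 4) ^ ((-(1:ℝ)/2 + ε)/4) := ha
        _ ≤ (u ^ (4*n+2) * v ^ 5) ^ ((-(1:ℝ)/2 + ε)/4) := hb
        _ = u ^ (((4*n+2 : ℕ) : ℝ) * ((-(1:ℝ)/2 + ε)/4)) * v ^ ((5:ℝ) * ((-(1:ℝ)/2 + ε)/4)) := hc
        _ ≤ u ^ (-sy) * v ^ (-sz) :=
            mul_le_mul hd he (Real.rpow_nonneg hv0.le _) (Real.rpow_nonneg hu0.le _)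
    have huw : u ^ (-sy) ≤ 2 ^ sy * ((1:ℝ) + ‖y‖ ^ 2) ^ (-sy) := by
      have h1 : ((1:ℝ) + ‖y‖ ^ 2)/2 ≤ u := by rw [hu_def]; nlinarith [sq_nonneg ‖y‖]
      have h2 : u ^ (-sy) ≤ (((1:ℝ) + ‖y‖ ^ 2)/2) ^ (-sy) :=
        Real.rpow_le_rpow_of_nonpos (by positivity) h1 (by linarith)
      have h3 : (((1:ℝ) + ‖y‖ ^ 2)/2) ^ (-sy) = 2 ^ sy * ((1:ℝ) + ‖y‖ ^ 2) ^ (-sy) := by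
        rw [Real.div_rpow (by positivity) (by norm_num), Real.rpow_neg (by norm_num : (0:ℝ) ≤ 2)]
        field_simp
      linarith [h2, h3.le, h3.ge]
    have hvz : v ^ (-sz) = ((1:ℝ) + ‖z‖ ^ 2) ^ (-sz) := by rw [hz2, hv_def]
    have hL := hC (A * B ^ n) hΨ1
    have hF0 : (0:ℝ) ≤ (A * B ^ n) ^ (-(1:ℝ)/2) * (1 + 1/2 * Real.log (A * B ^ n)) ^ r :=
      mul_nonneg (Real.rpow_nonneg hΨ0.le _) (Real.rpow_nonneg (by linarith) _)
    rw [Real.norm_eq_abs, abs_of_nonneg hF0]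
    calc (A * B ^ n) ^ (-(1:ℝ)/2) * (1 + 1/2 * Real.log (A * B ^ n)) ^ r
        ≤ (A * B ^ n) ^ (-(1:ℝ)/2) * (C * (A * B ^ n) ^ ε) :=
          mul_le_mul_of_nonneg_left hL (Real.rpow_nonneg hΨ0.le _)
      _ = C * ((A * B ^ n) ^ (-(1:ℝ)/2) * (A * B ^ n) ^ ε) := by ring
      _ = C * (A * B ^ n) ^ (-(1:ℝ)/2 + ε) := by rw [← Real.rpow_add hΨ0]
      _ ≤ C * (u ^ (-sy) * v ^ (-sz)) := mul_le_mul_of_nonneg_left hmain hC0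
      _ ≤ C * ((2 ^ sy * ((1:ℝ) + ‖y‖ ^ 2) ^ (-sy)) * ((1:ℝ) + ‖z‖ ^ 2) ^ (-sz)) := by
          rw [← hvz]
          exact mul_le_mul_of_nonneg_left
            (mul_le_mul_of_nonneg_right huw (Real.rpow_nonneg hv0.le _)) hC0
      _ = C * 2 ^ sy * (((1:ℝ) + ‖y‖ ^ 2) ^ (-sy) * ((1:ℝ) + ‖z‖ ^ 2) ^ (-sz)) := by ring
end

section
/- Let n ≥ 2 and let y = (y₁, …, y_{n-1}) ∈ ℝ^{n-1}. Let v be the n×n matrix with block form [[I_{n-1}, y],[0, 1]], i.e. v is the identity matrix except that its last column is (y₁, …, y_{n-1}, 1)ᵀ. Then for each 1 ≤ k ≤ n-1, the k-th trailing Gram determinant of v equals 1 + Σ_{j=1}^{n-k} y_j², and consequently ∏_{k=1}^{n-1} G_k(v) = ∏_{i=1}^{n-1} (1 + Σ_{j=1}^{i} y_j²). -/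
/-- The `k`-th trailing Gram determinant of an `n × n` real matrix `M` (for `k ≤ n`):
the determinant of the `k × k` matrix whose `(p,q)` entry is the Euclidean inner
product of columns `n - k + p` and `n - k + q` of `M`. -/
noncomputable def trailingGram (n k : ℕ) (hk : k ≤ n) (M : Matrix (Fin n) (Fin n) ℝ) : ℝ :=
  Matrix.det (Matrix.of fun p q : Fin k =>
    ∑ i : Fin n,
      M i ⟨n - k + (p : ℕ), by have := p.isLt; omega⟩ *
      M i ⟨n - k + (q : ℕ), by have := q.isLt; omega⟩)

private lemma gram_aux (n : ℕ) (hn : 2 ≤ n) (y : Fin (n - 1) → ℝ) (K : ℕ) (hK : K < n - 1) :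
    trailingGram n (K + 1) (by omega)
      (Matrix.of fun i j : Fin n =>
        if (j : ℕ) = n - 1 then
          (if h : (i : ℕ) < n - 1 then y ⟨i, h⟩ else 1)
        else if i = j then 1 else 0) =
    1 + ∑ j ∈ Finset.range (n - 1 - K),
      (if h : j < n - 1 then y ⟨j, h⟩ else 0) ^ 2 := by
  set Y : ℕ → ℝ := fun j => if h : j < n - 1 then y ⟨j, h⟩ else 0 with hY
  set m : ℕ := n - 1 - K with hm
  have hmK : m + K = n - 1 := by omega
  have hm1 : 1 ≤ m := by omega
  have hnK : n - (K + 1) = m := by omega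
  set T : ℝ := 1 + ∑ j ∈ Finset.range m, Y j ^ 2 with hT
  have hT0 : 0 ≤ T := by
    have : 0 ≤ ∑ j ∈ Finset.range m, Y j ^ 2 :=
      Finset.sum_nonneg fun j _ => sq_nonneg _
    rw [hT]; linarith
  set t : ℝ := Real.sqrt T with ht
  have htt : t * t = T := Real.mul_self_sqrt hT0
  set B : Matrix (Fin (K + 1)) (Fin (K + 1)) ℝ := Matrix.of fun p q =>
    if (q : ℕ) = K then (if (p : ℕ) = K then t else Y (m + (p : ℕ)))
    else if (p : ℕ) = (q : ℕ) then 1 else 0 with hB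
  have key : trailingGram n (K + 1) (by omega)
      (Matrix.of fun i j : Fin n =>
        if (j : ℕ) = n - 1 then
          (if h : (i : ℕ) < n - 1 then y ⟨i, h⟩ else 1)
        else if i = j then 1 else 0) = (B.transpose * B).det := by
    unfold trailingGram
    congr 1
    ext p q
    simp only [Matrix.of_apply, Matrix.mul_apply, Matrix.transpose_apply]
    have hcol : ∀ (p : Fin (K + 1)) (hp : n - (K + 1) + (p : ℕ) < n) (i : Fin n),
        (if ((⟨n - (K + 1) + (p : ℕ), hp⟩ : Fin n) : ℕ) = n - 1 then
          (if h : (i : ℕ) < n - 1 then y ⟨i, h⟩ else 1)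
        else if i = ⟨n - (K + 1) + (p : ℕ), hp⟩ then 1 else 0) =
        if (p : ℕ) = K then (if h : (i : ℕ) < n - 1 then y ⟨i, h⟩ else 1)
        else if (i : ℕ) = m + (p : ℕ) then 1 else 0 := by
      intro p hp i
      have hpK := p.isLt
      by_cases h : (p : ℕ) = K
      · rw [if_pos (by simp; omega), if_pos h]
      · rw [if_neg (by simp; omega), if_neg h]
        congr 1
        simp [Fin.ext_iff]
        omega
    have hBval : ∀ (r p : Fin (K + 1)), B r p =
        if (p : ℕ) = K then (if (r : ℕ) = K then t else Y (m + (r : ℕ)))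
        else if (r : ℕ) = (p : ℕ) then 1 else 0 := fun r p => rfl
    simp only [hcol, hBval]
    rw [Fin.sum_univ_eq_sum_range (fun i =>
      (if (p : ℕ) = K then (if h : i < n - 1 then y ⟨i, h⟩ else 1)
        else if i = m + (p : ℕ) then 1 else 0) *
      (if (q : ℕ) = K then (if h : i < n - 1 then y ⟨i, h⟩ else 1)
        else if i = m + (q : ℕ) then 1 else 0)) n]
    rw [Fin.sum_univ_eq_sum_range (fun r =>
      (if (p : ℕ) = K then (if r = K then t else Y (m + r))
        else if r = (p : ℕ) then 1 else 0) *
      (if (q : ℕ) = K then (if r = K then t else Y (m + r))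
        else if r = (q : ℕ) then 1 else 0)) (K + 1)]
    have hpK := p.isLt
    have hqK := q.isLt
    by_cases hp : (p : ℕ) = K <;> by_cases hq : (q : ℕ) = K
    · -- diagonal corner
      simp only [if_pos hp, if_pos hq]
      rw [show Finset.range n = Finset.range ((n - 1) + 1) from by
        congr 1; omega]
      rw [Finset.sum_range_succ]
      have h1 : ∀ i ∈ Finset.range (n - 1),
          (if h : i < n - 1 then y ⟨i, h⟩ else 1) *
          (if h : i < n - 1 then y ⟨i, h⟩ else 1) = Y i ^ 2 := by
        intro i hi
        rw [Finset.mem_range] at hi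
        rw [dif_pos hi, hY]; simp [dif_pos hi]; ring
      rw [Finset.sum_congr rfl h1, dif_neg (by omega)]
      rw [Finset.sum_range_succ]
      have h2 : ∀ r ∈ Finset.range K,
          (if r = K then t else Y (m + r)) * (if r = K then t else Y (m + r)) =
          Y (m + r) ^ 2 := by
        intro r hr
        rw [Finset.mem_range] at hr
        rw [if_neg (by omega)]; ring
      rw [Finset.sum_congr rfl h2, if_pos rfl, htt, hT]
      rw [show n - 1 = m + K from hmK.symm, Finset.sum_range_add]
      ring
    · -- p = K, q < K
      simp only [if_pos hp, if_neg hq]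
      have hq' : (q : ℕ) < K := by omega
      have h1 : ∀ i ∈ Finset.range n,
          (if h : i < n - 1 then y ⟨i, h⟩ else 1) * (if i = m + (q : ℕ) then 1 else 0) =
          if i = m + (q : ℕ) then Y i else 0 := by
        intro i _
        by_cases h : i = m + (q : ℕ)
        · rw [if_pos h, if_pos h, mul_one, hY]
          have : i < n - 1 := by omega
          simp [dif_pos this, this]
        · simp [if_neg h]
      rw [Finset.sum_congr rfl h1, Finset.sum_ite_eq' (Finset.range n)]
      rw [if_pos (Finset.mem_range.mpr (by omega))]
      have h2 : ∀ r ∈ Finset.range (K + 1),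
          (if r = K then t else Y (m + r)) * (if r = (q : ℕ) then 1 else 0) =
          if r = (q : ℕ) then Y (m + r) else 0 := by
        intro r _
        by_cases h : r = (q : ℕ)
        · rw [if_pos h, if_pos h, mul_one, if_neg (by omega)]
        · simp [if_neg h]
      rw [Finset.sum_congr rfl h2, Finset.sum_ite_eq' (Finset.range (K + 1))]
      rw [if_pos (Finset.mem_range.mpr (by omega))]
    · -- p < K, q = K
      simp only [if_neg hp, if_pos hq]
      have hp' : (p : ℕ) < K := by omega
      have h1 : ∀ i ∈ Finset.range n,
          (if i = m + (p : ℕ) then 1 else 0) * (if h : i < n - 1 then y ⟨i, h⟩ else 1) =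
          if i = m + (p : ℕ) then Y i else 0 := by
        intro i _
        by_cases h : i = m + (p : ℕ)
        · rw [if_pos h, if_pos h, one_mul, hY]
          have : i < n - 1 := by omega
          simp [dif_pos this, this]
        · simp [if_neg h]
      rw [Finset.sum_congr rfl h1, Finset.sum_ite_eq' (Finset.range n)]
      rw [if_pos (Finset.mem_range.mpr (by omega))]
      have h2 : ∀ r ∈ Finset.range (K + 1),
          (if r = (p : ℕ) then 1 else 0) * (if r = K then t else Y (m + r)) =
          if r = (p : ℕ) then Y (m + r) else 0 := by
        intro r _
        by_cases h : r = (p : ℕ)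
        · rw [if_pos h, if_pos h, one_mul, if_neg (by omega)]
        · simp [if_neg h]
      rw [Finset.sum_congr rfl h2, Finset.sum_ite_eq' (Finset.range (K + 1))]
      rw [if_pos (Finset.mem_range.mpr (by omega))]
    · -- both < K
      simp only [if_neg hp, if_neg hq]
      have h1 : ∀ i ∈ Finset.range n,
          (if i = m + (p : ℕ) then (1:ℝ) else 0) * (if i = m + (q : ℕ) then 1 else 0) =
          if i = m + (p : ℕ) then (if i = m + (q : ℕ) then 1 else 0) else 0 := by
        intro i _
        by_cases h : i = m + (p : ℕ) <;> simp [h]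
      rw [Finset.sum_congr rfl h1, Finset.sum_ite_eq' (Finset.range n)]
      rw [if_pos (Finset.mem_range.mpr (by omega))]
      have h2 : ∀ r ∈ Finset.range (K + 1),
          (if r = (p : ℕ) then (1:ℝ) else 0) * (if r = (q : ℕ) then 1 else 0) =
          if r = (p : ℕ) then (if r = (q : ℕ) then 1 else 0) else 0 := by
        intro r _
        by_cases h : r = (p : ℕ) <;> simp [h]
      rw [Finset.sum_congr rfl h2, Finset.sum_ite_eq' (Finset.range (K + 1))]
      rw [if_pos (Finset.mem_range.mpr (by omega))]
      by_cases h : (p : ℕ) = (q : ℕ)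
      · rw [if_pos (by omega), if_pos h]
      · rw [if_neg (by omega), if_neg h]
  rw [key]
  
  have hBtri : B.BlockTriangular id := by
    intro i j hij
    have hij' : (j : ℕ) < (i : ℕ) := hij
    have := i.isLt
    show (if (j : ℕ) = K then (if (i : ℕ) = K then t else Y (m + (i : ℕ)))
      else if (i : ℕ) = (j : ℕ) then 1 else 0) = 0
    rw [if_neg (by omega), if_neg (by omega)]
  have hdetB : B.det = t := by
    rw [Matrix.det_of_upperTriangular hBtri]
    have hdiag : ∀ i : Fin (K + 1), B i i = if (i : ℕ) = K then t else 1 := by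
      intro i
      show (if (i : ℕ) = K then (if (i : ℕ) = K then t else Y (m + (i : ℕ)))
        else if (i : ℕ) = (i : ℕ) then 1 else 0) = _
      by_cases h : (i : ℕ) = K <;> simp [h]
    rw [Finset.prod_congr rfl fun i _ => hdiag i]
    rw [Fin.prod_univ_eq_prod_range (fun i => if i = K then t else 1) (K + 1)]
    rw [Finset.prod_ite_eq' (Finset.range (K + 1)) K (fun _ => t)]
    rw [if_pos (Finset.mem_range.mpr (by omega))]
  rw [Matrix.det_mul, Matrix.det_transpose, hdetB, htt, hT]

theorem stmt_11 (n : ℕ) (hn : 2 ≤ n) (y : Fin (n - 1) → ℝ)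
    (v : Matrix (Fin n) (Fin n) ℝ)
    (hv : v = Matrix.of fun i j : Fin n =>
      if (j : ℕ) = n - 1 then
        (if h : (i : ℕ) < n - 1 then y ⟨i, h⟩ else 1)
      else if i = j then 1 else 0) :
    (∀ k : Fin (n - 1),
      trailingGram n ((k : ℕ) + 1) (by have := k.isLt; omega) v =
        1 + ∑ j : Fin (n - 1 - (k : ℕ)),
          y ⟨j, by have := j.isLt; omega⟩ ^ 2) ∧
    (∏ k : Fin (n - 1),
        trailingGram n ((k : ℕ) + 1) (by have := k.isLt; omega) v) =
      ∏ i : Fin (n - 1),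
        (1 + ∑ j : Fin ((i : ℕ) + 1),
          y ⟨j, by have := j.isLt; have := i.isLt; omega⟩ ^ 2) := by
  subst hv
  set Y : ℕ → ℝ := fun j => if h : j < n - 1 then y ⟨j, h⟩ else 0 with hY
  have hsum : ∀ (M : ℕ) (hM : M ≤ n - 1),
      (∑ j ∈ Finset.range M, Y j ^ 2) =
      ∑ j : Fin M, y ⟨(j : ℕ), lt_of_lt_of_le j.isLt hM⟩ ^ 2 := by
    intro M hM
    rw [← Fin.sum_univ_eq_sum_range (fun j => Y j ^ 2) M]
    apply Finset.sum_congr rfl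
    intro j _
    have hj : (j : ℕ) < n - 1 := lt_of_lt_of_le j.isLt hM
    simp [hY, hj]
  have part1 : ∀ k : Fin (n - 1),
      trailingGram n ((k : ℕ) + 1) (by have := k.isLt; omega)
        (Matrix.of fun i j : Fin n =>
          if (j : ℕ) = n - 1 then
            (if h : (i : ℕ) < n - 1 then y ⟨i, h⟩ else 1)
          else if i = j then 1 else 0) =
      1 + ∑ j : Fin (n - 1 - (k : ℕ)),
        y ⟨j, by have := j.isLt; omega⟩ ^ 2 := by
    intro k
    rw [gram_aux n hn y k k.isLt]
    rw [show (∑ j ∈ Finset.range (n - 1 - (k : ℕ)),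
        (if h : j < n - 1 then y ⟨j, h⟩ else 0) ^ 2) =
        ∑ j ∈ Finset.range (n - 1 - (k : ℕ)), Y j ^ 2 from rfl]
    rw [hsum (n - 1 - (k : ℕ)) (by omega)]
  refine ⟨part1, ?_⟩
  rw [Finset.prod_congr rfl fun k _ => part1 k]
  have step1 : (∏ k : Fin (n - 1),
      (1 + ∑ j : Fin (n - 1 - (k : ℕ)),
        y ⟨j, by have := j.isLt; omega⟩ ^ 2)) =
      ∏ k ∈ Finset.range (n - 1), (1 + ∑ j ∈ Finset.range (n - 1 - k), Y j ^ 2) := by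
    rw [← Fin.prod_univ_eq_prod_range
      (fun k => 1 + ∑ j ∈ Finset.range (n - 1 - k), Y j ^ 2) (n - 1)]
    apply Finset.prod_congr rfl
    intro k _
    rw [hsum (n - 1 - (k : ℕ)) (by omega)]
  have step2 : (∏ i : Fin (n - 1),
      (1 + ∑ j : Fin ((i : ℕ) + 1),
        y ⟨j, by have := j.isLt; have := i.isLt; omega⟩ ^ 2)) =
      ∏ i ∈ Finset.range (n - 1), (1 + ∑ j ∈ Finset.range (i + 1), Y j ^ 2) := by
    rw [← Fin.prod_univ_eq_prod_range
      (fun i => 1 + ∑ j ∈ Finset.range (i + 1), Y j ^ 2) (n - 1)]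
    apply Finset.prod_congr rfl
    intro i _
    rw [hsum ((i : ℕ) + 1) (by have := i.isLt; omega)]
  rw [step1, step2]
  rw [← Finset.prod_range_reflect (fun i => 1 + ∑ j ∈ Finset.range (i + 1), Y j ^ 2) (n - 1)]
  apply Finset.prod_congr rfl
  intro k hk
  rw [Finset.mem_range] at hk
  rw [show n - 1 - 1 - k + 1 = n - 1 - k from by omega]
end

section
/- Let n ≥ 2 and let B be an n×n complex unitary matrix written in block form B = [[A, b],[c, d]], where A is the top-left (n-1)×(n-1) block, b is an (n-1)×1 column, c is a 1×(n-1) row, and d is a scalar. If d ≠ 0, then A is invertible and c A⁻¹ = -b*/d̄, i.e. the j-th entry of the row vector c A⁻¹ equals -conj(b_j)/conj(d). -/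
theorem stmt_15 (n : ℕ) (hn : 2 ≤ n)
    (B : Matrix (Fin n) (Fin n) ℂ)
    (hB : B * B.conjTranspose = 1)
    (A : Matrix (Fin (n - 1)) (Fin (n - 1)) ℂ)
    (hA : A = B.submatrix (Fin.castLE (by omega)) (Fin.castLE (by omega)))
    (b : Fin (n - 1) → ℂ) (hb : b = fun i => B (Fin.castLE (by omega) i) ⟨n - 1, by omega⟩)
    (c : Fin (n - 1) → ℂ) (hc : c = fun j => B ⟨n - 1, by omega⟩ (Fin.castLE (by omega) j))
    (d : ℂ) (hd : d = B ⟨n - 1, by omega⟩ ⟨n - 1, by omega⟩)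
    (hdne : d ≠ 0) :
    IsUnit A ∧ ∀ j, Matrix.vecMul c A⁻¹ j = -(starRingEnd ℂ) (b j) / (starRingEnd ℂ) d := by
  obtain ⟨m, rfl⟩ : ∃ m, n = m + 1 := ⟨n - 1, by omega⟩
  have hB' : B.conjTranspose * B = 1 := mul_eq_one_comm.mp hB
  have hcol : ∀ i j : Fin (m + 1),
      ∑ k, (starRingEnd ℂ) (B k i) * B k j = if i = j then 1 else 0 := by
    intro i j
    have := congrFun (congrFun hB' i) j
    simpa [Matrix.mul_apply, Matrix.conjTranspose_apply, Matrix.one_apply] using this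
  have hrow : ∀ i j : Fin (m + 1),
      ∑ k, B i k * (starRingEnd ℂ) (B j k) = if i = j then 1 else 0 := by
    intro i j
    have := congrFun (congrFun hB i) j
    simpa [Matrix.mul_apply, Matrix.conjTranspose_apply, Matrix.one_apply] using this
  have hAe : ∀ i j : Fin m, A i j = B i.castSucc j.castSucc := by
    intro i j; rw [hA]; rfl
  have hbe : ∀ i : Fin m, b i = B i.castSucc (Fin.last m) := by
    intro i; rw [hb]; rfl
  have hce : ∀ j : Fin m, c j = B (Fin.last m) j.castSucc := by
    intro j; rw [hc]; rfl
  have hde : d = B (Fin.last m) (Fin.last m) := hd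
  have hAA : ∀ i j : Fin m, ∑ k : Fin m, (starRingEnd ℂ) (A k i) * A k j
      = (if i = j then 1 else 0) - (starRingEnd ℂ) (c i) * c j := by
    intro i j
    have h := hcol i.castSucc j.castSucc
    rw [Fin.sum_univ_castSucc] at h
    simp only [← hAe, ← hce, Fin.castSucc_inj] at h
    linear_combination h
  have hAb : ∀ i : Fin m, ∑ k : Fin m, (starRingEnd ℂ) (A k i) * b k
      = -((starRingEnd ℂ) (c i) * d) := by
    intro i
    have h := hcol i.castSucc (Fin.last m)
    rw [Fin.sum_univ_castSucc] at h
    simp only [← hAe, ← hbe, ← hce, ← hde] at h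
    rw [if_neg (Fin.castSucc_lt_last i).ne] at h
    linear_combination h
  have hcc : ∑ k : Fin m, c k * (starRingEnd ℂ) (c k) + d * (starRingEnd ℂ) d = 1 := by
    have h := hrow (Fin.last m) (Fin.last m)
    rw [Fin.sum_univ_castSucc] at h
    simp only [← hce, ← hde, eq_self_iff_true, if_true] at h
    linear_combination h
  have hkey : ∀ x : Fin m → ℂ, A.mulVec x = 0 → x = 0 := by
    intro x hx
    set t : ℂ := ∑ j : Fin m, c j * x j with ht
    have hx' : ∀ i, x i = (starRingEnd ℂ) (c i) * t := by
      intro i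
      have h0 : ∑ k : Fin m, (starRingEnd ℂ) (A k i) * (∑ j : Fin m, A k j * x j) = 0 := by
        apply Finset.sum_eq_zero
        intro k _
        have h00 : ∑ j : Fin m, A k j * x j = 0 := by
          have := congrFun hx k
          simpa [Matrix.mulVec, dotProduct] using this
        rw [h00, mul_zero]
      have h1 : ∑ j : Fin m, (∑ k : Fin m, (starRingEnd ℂ) (A k i) * A k j) * x j = 0 := by
        calc ∑ j : Fin m, (∑ k : Fin m, (starRingEnd ℂ) (A k i) * A k j) * x j
            = ∑ j : Fin m, ∑ k : Fin m, (starRingEnd ℂ) (A k i) * A k j * x j :=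
              Finset.sum_congr rfl fun j _ => Finset.sum_mul _ _ _
          _ = ∑ k : Fin m, ∑ j : Fin m, (starRingEnd ℂ) (A k i) * A k j * x j :=
              Finset.sum_comm
          _ = ∑ k : Fin m, (starRingEnd ℂ) (A k i) * ∑ j : Fin m, A k j * x j := by
              refine Finset.sum_congr rfl fun k _ => ?_
              rw [Finset.mul_sum]
              exact Finset.sum_congr rfl fun j _ => by ring
          _ = 0 := h0
      simp only [hAA] at h1
      have h2 : ∑ j : Fin m, ((if i = j then 1 else 0) - (starRingEnd ℂ) (c i) * c j) * x j
          = x i - (starRingEnd ℂ) (c i) * t := by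
        have e1 : ∀ j ∈ (Finset.univ : Finset (Fin m)),
            ((if i = j then 1 else 0) - (starRingEnd ℂ) (c i) * c j) * x j
            = (if j = i then x j else 0) - (starRingEnd ℂ) (c i) * (c j * x j) := by
          intro j _
          rcases eq_or_ne i j with h | h
          · subst h; simp; ring
          · rw [if_neg h, if_neg (Ne.symm h)]; ring
        rw [Finset.sum_congr rfl e1, Finset.sum_sub_distrib,
          Finset.sum_ite_eq' Finset.univ i x, if_pos (Finset.mem_univ i), ht, Finset.mul_sum]
      rw [h2] at h1
      exact sub_eq_zero.mp h1
    have htt : t = (∑ k : Fin m, c k * (starRingEnd ℂ) (c k)) * t := by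
      conv_lhs => rw [ht]
      rw [Finset.sum_mul]
      apply Finset.sum_congr rfl
      intro j _
      rw [hx' j]; ring
    have ht0 : t = 0 := by
      have hsum : (∑ k : Fin m, c k * (starRingEnd ℂ) (c k)) = 1 - d * (starRingEnd ℂ) d := by
        linear_combination hcc
      rw [hsum] at htt
      have h3 : d * (starRingEnd ℂ) d * t = 0 := by linear_combination htt
      have hds : (starRingEnd ℂ) d ≠ 0 := by simpa using hdne
      exact (mul_eq_zero.mp h3).resolve_left (mul_ne_zero hdne hds)
    funext i
    rw [hx' i, ht0, mul_zero]
    simp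
  have hAunit : IsUnit A := by
    rw [← Matrix.mulVec_injective_iff_isUnit]
    intro x y hxy
    have := hkey (x - y) (by rw [Matrix.mulVec_sub, hxy, sub_self])
    exact sub_eq_zero.mp this
  refine ⟨hAunit, ?_⟩
  have hAmul : A * A⁻¹ = 1 := Matrix.mul_nonsing_inv A (hAunit.map Matrix.detMonoidHom)
  have hvm : Matrix.vecMul (star b) A = fun i => -((starRingEnd ℂ) d * c i) := by
    funext i
    have h := hAb i
    have h' := congrArg (starRingEnd ℂ) h
    simp only [map_sum, map_mul, map_neg, RingHomCompTriple.comp_apply, Complex.conj_conj,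
      RingHom.id_apply] at h'
    show ∑ k : Fin m, ((star b) k) * A k i = -((starRingEnd ℂ) d * c i)
    rw [Finset.sum_congr rfl
      (fun k _ => by rw [Pi.star_apply, RCLike.star_def, mul_comm] :
        ∀ k ∈ (Finset.univ : Finset (Fin m)),
          ((star b) k) * A k i = A k i * (starRingEnd ℂ) (b k))]
    linear_combination h'
  intro j
  have h4 : Matrix.vecMul (Matrix.vecMul (star b) A) A⁻¹ = star b := by
    rw [Matrix.vecMul_vecMul, hAmul, Matrix.vecMul_one]
  rw [hvm] at h4
  have h5 := congrFun h4 j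
  have h6 : (∑ k : Fin m, -((starRingEnd ℂ) d * c k) * A⁻¹ k j)
      = -((starRingEnd ℂ) d) * ∑ k : Fin m, c k * A⁻¹ k j := by
    rw [Finset.mul_sum]
    apply Finset.sum_congr rfl
    intro k _
    ring
  have h5' : -((starRingEnd ℂ) d) * (∑ k : Fin m, c k * A⁻¹ k j) = (starRingEnd ℂ) (b j) := by
    rw [← h6]
    rw [show (∑ k : Fin m, -((starRingEnd ℂ) d * c k) * A⁻¹ k j) =
      Matrix.vecMul (fun i => -((starRingEnd ℂ) d * c i)) A⁻¹ j from rfl, h5]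
    rfl
  have hS : Matrix.vecMul c A⁻¹ j = ∑ k : Fin m, c k * A⁻¹ k j := rfl
  rw [hS]
  have hds : (starRingEnd ℂ) d ≠ 0 := by simpa using hdne
  rw [eq_div_iff hds]
  linear_combination -h5'
end

section
/- Let m ≥ 1 be an integer, let 0 < α < 1, and for u ∈ ℝ^m define ψ_{α,u}(x) = (1 + Σ_{i=1}^{m} x_i² + ⟨u, x⟩²)^{α} · ∏_{i=1}^{m} (1 + x_i²) for x ∈ ℝ^m, where ⟨u,x⟩ = Σ_i u_i x_i. Then for every ε with 0 ≤ ε < 1 there exists a constant C = C(α, m, ε) > 0, independent of u, such that for all u ∈ ℝ^m, ∫_{ℝ^m} ψ_{α,u}(x)^{-1/2} dx ≤ C (1 + ‖u‖²)^{-αε/2}. -/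
set_option maxHeartbeats 1000000

open MeasureTheory
open scoped ENNReal NNReal

namespace Stmt16Aux

noncomputable def Iq (ρ : ℝ) : ENNReal := ∫⁻ t : ℝ, ENNReal.ofReal ((1 + t ^ 2) ^ (-ρ))

lemma integrable_aux {ρ : ℝ} (hρ : 1/2 < ρ) :
    Integrable (fun s : ℝ => (1 + s ^ 2) ^ (-ρ)) := by
  have hfr : (Module.finrank ℝ ℝ : ℝ) < 2 * ρ := by
    simp only [Module.finrank_self, Nat.cast_one]; linarith
  have h := integrable_rpow_neg_one_add_norm_sq (E := ℝ) (μ := volume) hfr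
  convert h using 2 with s
  rw [Real.norm_eq_abs, sq_abs]
  rw [show -(2*ρ)/2 = -ρ by ring]

lemma Iq_lt_top {ρ : ℝ} (hρ : 1/2 < ρ) : Iq ρ < ⊤ := by
  have h := (integrable_aux hρ).hasFiniteIntegral
  rwa [hasFiniteIntegral_iff_ofReal (Filter.Eventually.of_forall fun s => by positivity)] at h

end Stmt16Aux

namespace Stmt16Aux

lemma meas_aux (A c r : ℝ) :
    Measurable fun s : ℝ => ENNReal.ofReal ((1 + A * (s - c) ^ 2) ^ (-r)) := by
  fun_prop

lemma lintegral_shift_scale {A : ℝ} (hA : 0 < A) (c : ℝ) (r : ℝ) :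
    (∫⁻ s : ℝ, ENNReal.ofReal ((1 + A * (s - c) ^ 2) ^ (-r)))
      = ENNReal.ofReal (A ^ (-(1 : ℝ)/2)) * Iq r := by
  have h1 : (∫⁻ s : ℝ, ENNReal.ofReal ((1 + A * (s - c) ^ 2) ^ (-r)))
      = ∫⁻ s : ℝ, ENNReal.ofReal ((1 + A * s ^ 2) ^ (-r)) := by
    simp_rw [sub_eq_add_neg]
    exact lintegral_add_right_eq_self (fun s => ENNReal.ofReal ((1 + A * s ^ 2) ^ (-r))) (-c)
  set a := Real.sqrt A with ha
  have ha0 : 0 < a := Real.sqrt_pos.mpr hA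
  have h2 : ∀ s : ℝ, A * s ^ 2 = (a * s) ^ 2 := by
    intro s; rw [mul_pow, Real.sq_sqrt hA.le]
  have hmeas : Measurable fun t : ℝ => ENNReal.ofReal ((1 + t ^ 2) ^ (-r)) := by fun_prop
  have h3 : (∫⁻ s : ℝ, ENNReal.ofReal ((1 + A * s ^ 2) ^ (-r)))
      = ∫⁻ s : ℝ, (fun t : ℝ => ENNReal.ofReal ((1 + t ^ 2) ^ (-r))) (a * s) := by
    simp_rw [h2]
  rw [h1, h3, ← lintegral_map hmeas (measurable_const_mul a),
    Real.map_volume_mul_left (ne_of_gt ha0), lintegral_smul_measure]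
  have : |a⁻¹| = A ^ (-(1 : ℝ)/2) := by
    rw [abs_inv, abs_of_pos ha0, ha, Real.sqrt_eq_rpow,
      show (-(1:ℝ)/2) = -(1/2) by norm_num, Real.rpow_neg hA.le]
  rw [this]; rfl

end Stmt16Aux

namespace Stmt16Aux

lemma inner_bound {p p' θ q : ℝ} (hθ0 : 0 < θ) (hθ1 : θ < 1)
    (hp0 : 0 ≤ p) (hpθ : 2 * p ≤ θ)
    {A c : ℝ} (hA : 1 ≤ A) :
    (∫⁻ s : ℝ, ENNReal.ofReal ((1 + A * (s - c) ^ 2) ^ (-p') * (1 + s ^ 2) ^ (-q)))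
      ≤ ENNReal.ofReal (A ^ (-p)) * ((Iq (p' / θ)) ^ θ * (Iq (q / (1 - θ))) ^ (1 - θ)) := by
  have hA0 : (0 : ℝ) < A := by linarith
  set f : ℝ → ENNReal := fun s => ENNReal.ofReal ((1 + A * (s - c) ^ 2) ^ (-p')) with hf
  set g : ℝ → ENNReal := fun s => ENNReal.ofReal ((1 + s ^ 2) ^ (-q)) with hg
  have hconj : (1 / θ).HolderConjugate (1 / (1 - θ)) := by
    refine Real.holderConjugate_iff.mpr ⟨?_, ?_⟩
    · rw [lt_div_iff₀ hθ0]; linarith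
    · rw [one_div, one_div, inv_inv, inv_inv]; ring
  have hfm : Measurable f := meas_aux A c p'
  have hgm : Measurable g := by fun_prop
  have hsplit : (∫⁻ s : ℝ, ENNReal.ofReal ((1 + A * (s - c) ^ 2) ^ (-p') * (1 + s ^ 2) ^ (-q)))
      = ∫⁻ s : ℝ, (f * g) s := by
    congr 1; funext s
    exact ENNReal.ofReal_mul (Real.rpow_nonneg (by positivity) _)
  have hfpow : ∀ s : ℝ, f s ^ (1 / θ) = ENNReal.ofReal ((1 + A * (s - c) ^ 2) ^ (-(p' / θ))) := by
    intro s
    have hb : (0 : ℝ) < 1 + A * (s - c) ^ 2 := by positivity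
    rw [hf]
    rw [ENNReal.ofReal_rpow_of_pos (Real.rpow_pos_of_pos hb _), ← Real.rpow_mul hb.le]
    congr 1
    field_simp
  have hgpow : ∀ s : ℝ, g s ^ (1 / (1 - θ)) = ENNReal.ofReal ((1 + s ^ 2) ^ (-(q / (1 - θ)))) := by
    intro s
    have hb : (0 : ℝ) < 1 + s ^ 2 := by positivity
    rw [hg]
    rw [ENNReal.ofReal_rpow_of_pos (Real.rpow_pos_of_pos hb _), ← Real.rpow_mul hb.le]
    congr 1
    have h1θ : (1 : ℝ) - θ ≠ 0 := by linarith
    field_simp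
  calc (∫⁻ s : ℝ, ENNReal.ofReal ((1 + A * (s - c) ^ 2) ^ (-p') * (1 + s ^ 2) ^ (-q)))
      = ∫⁻ s : ℝ, (f * g) s := hsplit
    _ ≤ (∫⁻ s : ℝ, f s ^ (1 / θ)) ^ (1 / (1 / θ)) *
        (∫⁻ s : ℝ, g s ^ (1 / (1 - θ))) ^ (1 / (1 / (1 - θ))) :=
        ENNReal.lintegral_mul_le_Lp_mul_Lq volume hconj hfm.aemeasurable hgm.aemeasurable
    _ = (ENNReal.ofReal (A ^ (-(1 : ℝ)/2)) * Iq (p' / θ)) ^ θ * (Iq (q / (1 - θ))) ^ (1 - θ) := by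
        rw [one_div_one_div, one_div_one_div]
        congr 1
        · congr 1
          simp_rw [hfpow]
          exact lintegral_shift_scale hA0 c _
        · congr 1
          simp_rw [hgpow]
          rfl
    _ = ENNReal.ofReal ((A ^ (-(1 : ℝ)/2)) ^ θ) * ((Iq (p' / θ)) ^ θ * (Iq (q / (1 - θ))) ^ (1 - θ)) := by
        rw [ENNReal.mul_rpow_of_nonneg _ _ hθ0.le,
          ENNReal.ofReal_rpow_of_pos (Real.rpow_pos_of_pos hA0 _)]
        ring
    _ ≤ ENNReal.ofReal (A ^ (-p)) * ((Iq (p' / θ)) ^ θ * (Iq (q / (1 - θ))) ^ (1 - θ)) := by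
        apply mul_le_mul' _ le_rfl
        apply ENNReal.ofReal_le_ofReal
        rw [← Real.rpow_mul hA0.le]
        exact Real.rpow_le_rpow_of_exponent_le hA (by linarith)

end Stmt16Aux

namespace Stmt16Aux

lemma pointwise_bound {n : ℕ} (u x : Fin (n + 1) → ℝ) (i : Fin (n + 1))
    {α ε' δ p' q : ℝ} (hα0 : 0 < α) (hε'0 : 0 ≤ ε') (hε'1 : ε' ≤ 1)
    (hδ : δ = α * (1 - ε') / (n + 1)) (hp' : p' = α * ε' / 2) (hq : q = (1 + δ) / 2) :
    ((1 + ∑ j, x j ^ 2 + (∑ j, u j * x j) ^ 2) ^ α * ∏ j, (1 + x j ^ 2)) ^ (-(1 : ℝ)/2)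
      ≤ (1 + (1 + u i ^ 2) *
            (x i - -(u i) * ((∑ j, u j * x j) - u i * x i) / (1 + u i ^ 2)) ^ 2) ^ (-p')
          * ∏ j, (1 + x j ^ 2) ^ (-q) := by
  set T : ℝ := ∑ j, u j * x j with hT
  set B : ℝ := T - u i * x i with hB
  set A : ℝ := 1 + u i ^ 2 with hA
  set c : ℝ := -(u i) * B / A with hc
  set S : ℝ := 1 + ∑ j, x j ^ 2 + T ^ 2 with hS
  set Pr : ℝ := ∏ j, (1 + x j ^ 2) with hPr
  have hA0 : (0 : ℝ) < A := by positivity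
  have hsum : (0 : ℝ) ≤ ∑ j, x j ^ 2 := Finset.sum_nonneg fun j _ => sq_nonneg _
  have hS1 : (1 : ℝ) ≤ S := by rw [hS]; nlinarith [sq_nonneg T]
  have hSpos : (0 : ℝ) < S := by linarith
  have hPr1 : (1 : ℝ) ≤ Pr := by
    rw [hPr]
    calc (1:ℝ) = ∏ _j : Fin (n+1), (1:ℝ) := by simp
      _ ≤ ∏ j, (1 + x j ^ 2) := Finset.prod_le_prod (fun j _ => by norm_num)
          (fun j _ => by nlinarith [sq_nonneg (x j)])
  have hPr0 : (0 : ℝ) < Pr := by linarith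
  set S₁ : ℝ := 1 + A * (x i - c) ^ 2 with hS₁
  have hS₁1 : (1 : ℝ) ≤ S₁ := by rw [hS₁]; nlinarith [sq_nonneg (x i - c), hA0.le]
  have hS₁0 : (0 : ℝ) < S₁ := by linarith
  -- Claim 1 : S₁ ≤ S
  have hcA : c * A = -(u i) * B := by rw [hc]; field_simp
  have h3 : A * (x i - c) = A * x i + u i * B := by linear_combination -hcA
  have h4 : A * (A * (x i - c) ^ 2) ≤ A * (x i ^ 2 + (u i * x i + B) ^ 2) := by
    have e : A * (A * (x i - c) ^ 2) = (A * x i + u i * B) ^ 2 := by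
      rw [← h3]; ring
    rw [e, hA]
    nlinarith [sq_nonneg B]
  have h5 : A * (x i - c) ^ 2 ≤ x i ^ 2 + (u i * x i + B) ^ 2 :=
    le_of_mul_le_mul_left h4 hA0
  have hxi : x i ^ 2 ≤ ∑ j, x j ^ 2 :=
    Finset.single_le_sum (fun j _ => sq_nonneg (x j)) (Finset.mem_univ i)
  have hT' : u i * x i + B = T := by rw [hB]; ring
  have hclaim1 : S₁ ≤ S := by
    rw [hS₁, hS]
    rw [hT'] at h5
    linarith
  -- Claim 3 : Pr ≤ S ^ (n+1)
  have hbound : ∀ j : Fin (n+1), 1 + x j ^ 2 ≤ S := by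
    intro j
    have hx : x j ^ 2 ≤ ∑ k, x k ^ 2 :=
      Finset.single_le_sum (fun k _ => sq_nonneg (x k)) (Finset.mem_univ j)
    rw [hS]; nlinarith [sq_nonneg T]
  have hclaim3 : Pr ≤ S ^ (n + 1) := by
    rw [hPr]
    calc ∏ j, (1 + x j ^ 2) ≤ ∏ _j : Fin (n+1), S :=
          Finset.prod_le_prod (fun j _ => by positivity) (fun j _ => hbound j)
      _ = S ^ (n+1) := by simp
  -- key inequality
  have hkey : S₁ ^ (α * ε') * Pr ^ (1 + δ) ≤ S ^ α * Pr := by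
    have e1 : S ^ α = S ^ (α * ε') * S ^ (α * (1 - ε')) := by
      rw [← Real.rpow_add hSpos]; ring_nf
    have e2 : S₁ ^ (α * ε') ≤ S ^ (α * ε') :=
      Real.rpow_le_rpow hS₁0.le hclaim1 (by positivity)
    have e3 : Pr ^ (1 + δ) = Pr ^ δ * Pr := by
      rw [add_comm, Real.rpow_add hPr0, Real.rpow_one]
    have hδ0 : 0 ≤ δ := by
      rw [hδ]
      apply div_nonneg (mul_nonneg hα0.le (by linarith)) (by positivity)
    have e4 : Pr ^ δ ≤ S ^ (α * (1 - ε')) := by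
      calc Pr ^ δ ≤ (S ^ (n + 1)) ^ δ := Real.rpow_le_rpow hPr0.le hclaim3 hδ0
        _ = S ^ (((n : ℝ) + 1) * δ) := by
            rw [← Real.rpow_natCast S (n + 1), ← Real.rpow_mul hSpos.le]
            norm_num
        _ = S ^ (α * (1 - ε')) := by
            congr 1
            rw [hδ]
            field_simp
    calc S₁ ^ (α * ε') * Pr ^ (1 + δ) = S₁ ^ (α * ε') * (Pr ^ δ * Pr) := by rw [e3]
      _ ≤ S ^ (α * ε') * (S ^ (α * (1 - ε')) * Pr) := by
          apply mul_le_mul e2 (mul_le_mul e4 le_rfl hPr0.le (Real.rpow_nonneg hSpos.le _))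
            (by positivity) (Real.rpow_nonneg hSpos.le _)
      _ = S ^ α * Pr := by rw [e1]; ring
  have hmain : (S ^ α * Pr) ^ (-(1:ℝ)/2) ≤ (S₁ ^ (α * ε') * Pr ^ (1 + δ)) ^ (-(1:ℝ)/2) := by
    apply Real.rpow_le_rpow_of_nonpos (by positivity) hkey (by norm_num)
  refine hmain.trans_eq ?_
  rw [Real.mul_rpow (Real.rpow_nonneg hS₁0.le _) (Real.rpow_nonneg hPr0.le _),
      ← Real.rpow_mul hS₁0.le, ← Real.rpow_mul hPr0.le]
  congr 1
  · congr 1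
    rw [hp']; ring
  · rw [hPr, Real.finset_prod_rpow _ _ (fun j _ => by positivity) _]
    congr 1
    rw [hq]; ring

end Stmt16Aux

namespace Stmt16Aux

lemma prod_lintegral_lt_top {n : ℕ} {q : ℝ} (hq : 1/2 < q) :
    (∫⁻ y : Fin n → ℝ, ∏ j, ENNReal.ofReal ((1 + y j ^ 2) ^ (-q))) < ⊤ := by
  have hint : Integrable (fun y : Fin n → ℝ => ∏ j, (1 + y j ^ 2) ^ (-q)) :=
    Integrable.fintype_prod (𝕜 := ℝ) (f := fun _ : Fin n => fun s : ℝ => (1 + s ^ 2) ^ (-q))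
      (fun _ => integrable_aux hq)
  have h := hint.hasFiniteIntegral
  rw [hasFiniteIntegral_iff_ofReal (Filter.Eventually.of_forall fun y =>
    Finset.prod_nonneg fun j _ => Real.rpow_nonneg (by positivity) _)] at h
  have heq : (fun y : Fin n → ℝ => ∏ j, ENNReal.ofReal ((1 + y j ^ 2) ^ (-q)))
      = fun y : Fin n → ℝ => ENNReal.ofReal (∏ j, (1 + y j ^ 2) ^ (-q)) := by
    funext y
    exact (ENNReal.ofReal_prod_of_nonneg fun j _ => Real.rpow_nonneg (by positivity) _).symm
  rw [heq]
  exact h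

end Stmt16Aux

open Stmt16Aux in
theorem stmt_16 (m : ℕ) (hm : 1 ≤ m) (α : ℝ) (hα0 : 0 < α) (hα1 : α < 1)
    (ε : ℝ) (hε0 : 0 ≤ ε) (hε1 : ε < 1) :
    ∃ C > (0 : ℝ), ∀ u : Fin m → ℝ,
      (∫⁻ x : Fin m → ℝ,
          ENNReal.ofReal
            (((1 + ∑ i, x i ^ 2 + (∑ i, u i * x i) ^ 2) ^ α *
                ∏ i, (1 + x i ^ 2)) ^ (-(1 : ℝ) / 2)) ∂volume) ≤
        ENNReal.ofReal (C * (1 + ∑ i, u i ^ 2) ^ (-(α * ε) / 2)) := by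
  obtain ⟨n, rfl⟩ : ∃ n, m = n + 1 := ⟨m - 1, (Nat.succ_pred_eq_of_pos hm).symm⟩
  clear hm
  set ε' : ℝ := (ε + 1) / 2 with hε'
  set p : ℝ := α * ε / 2 with hp
  set p' : ℝ := α * ε' / 2 with hp'
  set θ : ℝ := p + p' with hθ
  set δ : ℝ := α * (1 - ε') / (n + 1) with hδ
  set q : ℝ := (1 + δ) / 2 with hq
  have hε'0 : 0 ≤ ε' := by rw [hε']; linarith
  have hε'1 : ε' ≤ 1 := by rw [hε']; linarith
  have hε'lt : ε' < 1 := by rw [hε']; linarith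
  have hεε' : ε < ε' := by rw [hε']; linarith
  have hp0 : 0 ≤ p := by rw [hp]; positivity
  have hε'pos : 0 < ε' := by rw [hε']; linarith
  have hp'0 : 0 < p' := by rw [hp']; positivity
  have hpp' : p < p' := by
    rw [hp, hp']
    have := mul_lt_mul_of_pos_left hεε' hα0
    linarith
  have hθ0 : 0 < θ := by rw [hθ]; linarith
  have hθ1 : θ < 1 := by
    rw [hθ, hp, hp']
    nlinarith [mul_lt_mul_of_pos_left hε1 hα0, mul_lt_mul_of_pos_left hε'lt hα0]
  have hpθ : 2 * p ≤ θ := by rw [hθ]; linarith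
  have hδ0 : 0 < δ := by
    rw [hδ]
    apply div_pos (mul_pos hα0 (by linarith)) (by positivity)
  have hq2 : 1/2 < q := by rw [hq]; linarith
  have hr : 1/2 < p' / θ := by
    rw [lt_div_iff₀ hθ0, hθ]; linarith
  have hq₂ : 1/2 < q / (1 - θ) := by
    rw [lt_div_iff₀ (by linarith : (0:ℝ) < 1 - θ)]
    nlinarith
  set K1 : ℝ≥0∞ := (Iq (p' / θ)) ^ θ * (Iq (q / (1 - θ))) ^ (1 - θ) with hK1
  set K2 : ℝ≥0∞ := ∫⁻ y : Fin n → ℝ, ∏ j, ENNReal.ofReal ((1 + y j ^ 2) ^ (-q)) with hK2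
  have hK1top : K1 ≠ ⊤ := by
    rw [hK1]
    exact ENNReal.mul_ne_top
      (ENNReal.rpow_lt_top_of_nonneg hθ0.le (Iq_lt_top hr).ne).ne
      (ENNReal.rpow_lt_top_of_nonneg (by linarith) (Iq_lt_top hq₂).ne).ne
  have hK2top : K2 ≠ ⊤ := (prod_lintegral_lt_top hq2).ne
  set K : ℝ≥0∞ := K1 * K2 with hK
  have hKtop : K ≠ ⊤ := ENNReal.mul_ne_top hK1top hK2top
  refine ⟨(K.toReal + 1) * ((n : ℝ) + 1) ^ p, by positivity, fun u => ?_⟩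
  obtain ⟨i, -, hi⟩ := Finset.exists_max_image Finset.univ (fun j => u j ^ 2)
    ⟨0, Finset.mem_univ 0⟩
  set A : ℝ := 1 + u i ^ 2 with hA
  have hA1 : 1 ≤ A := by rw [hA]; nlinarith [sq_nonneg (u i)]
  have hA0 : 0 < A := by linarith
  set g : (Fin (n + 1) → ℝ) → ℝ≥0∞ := fun x =>
    ENNReal.ofReal ((1 + A *
        (x i - -(u i) * ((∑ j, u j * x j) - u i * x i) / A) ^ 2) ^ (-p'))
      * ∏ j, ENNReal.ofReal ((1 + x j ^ 2) ^ (-q)) with hg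
  -- Step 1 : pointwise bound
  have step1 : (∫⁻ x : Fin (n + 1) → ℝ,
      ENNReal.ofReal
        (((1 + ∑ i, x i ^ 2 + (∑ i, u i * x i) ^ 2) ^ α *
            ∏ i, (1 + x i ^ 2)) ^ (-(1 : ℝ) / 2)) ∂volume) ≤ ∫⁻ x, g x := by
    apply lintegral_mono
    intro x
    have hpt := pointwise_bound u x i hα0 hε'0 hε'1 hδ hp' hq
    rw [hg]
    refine le_trans (ENNReal.ofReal_le_ofReal hpt) (le_of_eq ?_)
    rw [ENNReal.ofReal_mul (Real.rpow_nonneg (by positivity) _),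
      ENNReal.ofReal_prod_of_nonneg fun j _ => Real.rpow_nonneg (by positivity) _]
  -- Step 2 : Fubini
  set e := MeasurableEquiv.piFinSuccAbove (fun _ : Fin (n + 1) => ℝ) i with he
  have hmp := (volume_preserving_piFinSuccAbove (fun _ : Fin (n + 1) => ℝ) i).symm
  have step2 : (∫⁻ x, g x) = ∫⁻ z : ℝ × (Fin n → ℝ), g (e.symm z) :=
    (hmp.lintegral_comp_emb (MeasurableEquiv.measurableEmbedding _) g).symm
  set C' : (Fin n → ℝ) → ℝ := fun y => -(u i) * (∑ j, u (i.succAbove j) * y j) / A with hC'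
  set H : ℝ × (Fin n → ℝ) → ℝ≥0∞ := fun z =>
    ENNReal.ofReal ((1 + A * (z.1 - C' z.2) ^ 2) ^ (-p'))
      * (ENNReal.ofReal ((1 + z.1 ^ 2) ^ (-q)) * ∏ j, ENNReal.ofReal ((1 + z.2 j ^ 2) ^ (-q)))
    with hH
  have hcomp : ∀ z : ℝ × (Fin n → ℝ), g (e.symm z) = H z := by
    rintro ⟨s, y⟩
    simp only [hg, hH, hC']
    obtain ⟨x', hx'⟩ : ∃ x' : Fin (n+1) → ℝ, x' = e.symm (s, y) := ⟨_, rfl⟩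
    rw [← hx']
    have hxi : x' i = s := by
      rw [hx', he]
      simp [MeasurableEquiv.piFinSuccAbove_symm_apply]
    have hxj : ∀ j, x' (i.succAbove j) = y j := by
      intro j
      rw [hx', he]
      simp [MeasurableEquiv.piFinSuccAbove_symm_apply]
    rw [Fin.sum_univ_succAbove (fun j => u j * x' j) i,
        Fin.prod_univ_succAbove (fun j => ENNReal.ofReal ((1 + x' j ^ 2) ^ (-q))) i]
    simp only [hxi, hxj]
    rw [add_sub_cancel_left]
  have hC'm : Measurable C' := by
    apply Measurable.div_const
    apply Measurable.const_mul
    exact Finset.measurable_sum _ fun j _ => (measurable_pi_apply j).const_mul _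
  have hHmeas : Measurable H := by
    rw [hH]
    fun_prop
  have step3 : (∫⁻ z : ℝ × (Fin n → ℝ), g (e.symm z)) = ∫⁻ y, ∫⁻ s, H (s, y) := by
    simp_rw [hcomp]
    rw [Measure.volume_eq_prod]
    exact lintegral_prod_symm H hHmeas.aemeasurable
  have inner : ∀ y : Fin n → ℝ, (∫⁻ s : ℝ, H (s, y))
      ≤ (ENNReal.ofReal (A ^ (-p)) * K1) * ∏ j, ENNReal.ofReal ((1 + y j ^ 2) ^ (-q)) := by
    intro y
    have hfm : Measurable fun s : ℝ =>
        ENNReal.ofReal ((1 + A * (s - C' y) ^ 2) ^ (-p')) * ENNReal.ofReal ((1 + s ^ 2) ^ (-q)) := by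
      exact ((meas_aux A (C' y) p')).mul (by fun_prop)
    calc (∫⁻ s : ℝ, H (s, y))
        = ∫⁻ s : ℝ, (ENNReal.ofReal ((1 + A * (s - C' y) ^ 2) ^ (-p'))
            * ENNReal.ofReal ((1 + s ^ 2) ^ (-q)))
            * ∏ j, ENNReal.ofReal ((1 + y j ^ 2) ^ (-q)) := by
          simp only [hH, mul_assoc]
      _ = (∫⁻ s : ℝ, ENNReal.ofReal ((1 + A * (s - C' y) ^ 2) ^ (-p'))
            * ENNReal.ofReal ((1 + s ^ 2) ^ (-q)))
            * ∏ j, ENNReal.ofReal ((1 + y j ^ 2) ^ (-q)) :=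
          lintegral_mul_const _ hfm
      _ ≤ (ENNReal.ofReal (A ^ (-p)) * K1) * ∏ j, ENNReal.ofReal ((1 + y j ^ 2) ^ (-q)) := by
          apply mul_le_mul' _ le_rfl
          have hib := inner_bound (p := p) (p' := p') (q := q) hθ0 hθ1 hp0 hpθ (c := C' y) hA1
          refine le_trans (le_of_eq ?_) hib
          congr 1; funext s
          rw [ENNReal.ofReal_mul (Real.rpow_nonneg (by positivity) _)]
  have step4 : (∫⁻ y : Fin n → ℝ, ∫⁻ s : ℝ, H (s, y))
      ≤ (ENNReal.ofReal (A ^ (-p)) * K1) * K2 := by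
    calc (∫⁻ y : Fin n → ℝ, ∫⁻ s : ℝ, H (s, y))
        ≤ ∫⁻ y : Fin n → ℝ, (ENNReal.ofReal (A ^ (-p)) * K1)
          * ∏ j, ENNReal.ofReal ((1 + y j ^ 2) ^ (-q)) := lintegral_mono inner
      _ = (ENNReal.ofReal (A ^ (-p)) * K1) * K2 := by
          rw [lintegral_const_mul' _ _ (ENNReal.mul_ne_top ENNReal.ofReal_ne_top hK1top), hK2]
  -- final numeric bound
  have hS0 : (0:ℝ) < 1 + ∑ j, u j ^ 2 := by positivity
  have hsum_le : 1 + ∑ j, u j ^ 2 ≤ ((n:ℝ) + 1) * A := by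
    have hs : (∑ j, u j ^ 2) ≤ ∑ _j : Fin (n+1), u i ^ 2 :=
      Finset.sum_le_sum fun j _ => hi j (Finset.mem_univ j)
    rw [Finset.sum_const, Finset.card_univ, Fintype.card_fin, nsmul_eq_mul] at hs
    rw [hA]
    push_cast at hs ⊢
    nlinarith [sq_nonneg (u i)]
  have hApow : A ^ (-p) ≤ ((n:ℝ) + 1) ^ p * (1 + ∑ j, u j ^ 2) ^ (-p) := by
    have h1 : (1 + ∑ j, u j ^ 2) ^ p ≤ ((n:ℝ)+1) ^ p * A ^ p := by
      rw [← Real.mul_rpow (by positivity) hA0.le]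
      exact Real.rpow_le_rpow hS0.le hsum_le hp0
    rw [Real.rpow_neg hA0.le, Real.rpow_neg hS0.le]
    calc (A ^ p)⁻¹ ≤ ((1 + ∑ j, u j ^ 2) ^ p / ((n:ℝ)+1) ^ p)⁻¹ := by
          apply inv_anti₀ (by positivity)
          rw [div_le_iff₀ (by positivity)]
          nlinarith [h1]
      _ = ((n:ℝ)+1) ^ p * ((1 + ∑ j, u j ^ 2) ^ p)⁻¹ := by
          rw [inv_div, div_eq_mul_inv]
  have hKT : (0:ℝ) ≤ K.toReal := ENNReal.toReal_nonneg
  calc (∫⁻ x : Fin (n + 1) → ℝ,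
          ENNReal.ofReal
            (((1 + ∑ i, x i ^ 2 + (∑ i, u i * x i) ^ 2) ^ α *
                ∏ i, (1 + x i ^ 2)) ^ (-(1 : ℝ) / 2)) ∂volume)
      ≤ ∫⁻ x, g x := step1
    _ = ∫⁻ y : Fin n → ℝ, ∫⁻ s : ℝ, H (s, y) := by rw [step2, step3]
    _ ≤ (ENNReal.ofReal (A ^ (-p)) * K1) * K2 := step4
    _ = ENNReal.ofReal (A ^ (-p)) * K := by rw [hK, mul_assoc]
    _ ≤ ENNReal.ofReal (((n:ℝ)+1) ^ p * (1 + ∑ j, u j ^ 2) ^ (-p))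
          * ENNReal.ofReal (K.toReal + 1) := by
        apply mul_le_mul' (ENNReal.ofReal_le_ofReal hApow)
        conv_lhs => rw [← ENNReal.ofReal_toReal hKtop]
        exact ENNReal.ofReal_le_ofReal (by linarith)
    _ = ENNReal.ofReal ((((n:ℝ)+1) ^ p * (1 + ∑ j, u j ^ 2) ^ (-p)) * (K.toReal + 1)) := by
        rw [← ENNReal.ofReal_mul (by positivity)]
    _ ≤ ENNReal.ofReal ((K.toReal + 1) * ((n:ℝ) + 1) ^ p
          * (1 + ∑ i, u i ^ 2) ^ (-(α * ε) / 2)) := by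
        apply ENNReal.ofReal_le_ofReal
        have hexp : -(α * ε) / 2 = -p := by rw [hp]; ring
        rw [hexp]
        exact le_of_eq (by ring)
end
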